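/- arXiv:2501.03470 — 6 statements merged into one kernel-verified Lean document; each statement's English description precedes it below -/
import Mathlib

section
/- If Σ(x,y) ∈ S[x,y]^q is an SOS polynomial matrix in the variables (x,y), and ν is a Borel measure on a closed set Y ⊂ ℝ^m with all moments finite, then the polynomial matrix x ↦ ∫_Y Σ(x,y) dν(y) (integrating the coefficient matrices of Σ viewed as a polynomial in y) is an SOS polynomial matrix in x. -/
open MeasureTheory MvPolynomial Matrix Finset

noncomputable section

/-- A polynomial matrix is an SOS matrix if it factors as `Tᵀ * T`. -/
def IsSOSMatrix {σ : Type*} {ι : Type*} [Fintype ι]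
    (M : Matrix ι ι (MvPolynomial σ ℝ)) : Prop :=
  ∃ (l : ℕ) (T : Matrix (Fin l) ι (MvPolynomial σ ℝ)), M = Tᵀ * T

/-- A polynomial is a sum of squares. -/
def IsSOSPoly {σ : Type*} (f : MvPolynomial σ ℝ) : Prop :=
  ∃ (l : ℕ) (g : Fin l → MvPolynomial σ ℝ), f = ∑ i, (g i) ^ 2

/-- The block-trace bilinear map `⟨A,B⟩_p = Tr_p (Aᵀ (I_p ⊗ B))`. -/
def lram {R : Type*} [CommSemiring R] {ιp ιq : Type*} [Fintype ιq]
    (A : Matrix (ιp × ιq) (ιp × ιq) R) (B : Matrix ιq ιq R) :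
    Matrix ιp ιp R :=
  Matrix.of fun i j => ∑ a : ιq, ∑ c : ιq, A (j, c) (i, a) * B c a

/-- The `x`-part of an exponent in the variables `x ⊕ y`. -/
def xPart {n m : ℕ} (d : (Fin n ⊕ Fin m) →₀ ℕ) : Fin n →₀ ℕ :=
  Finsupp.comapDomain Sum.inl d Sum.inl_injective.injOn

/-- Integrate out the `y`-variables of a polynomial in `(x, y)` against the measure `ν`:
`∫_Y Σ_β H_β(x) y^β dν := Σ_β H_β(x) ∫_Y y^β dν`. -/
def integY {n m : ℕ} (ν : Measure (Fin m → ℝ))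
    (q : MvPolynomial (Fin n ⊕ Fin m) ℝ) : MvPolynomial (Fin n) ℝ :=
  ∑ d ∈ q.support, MvPolynomial.monomial (xPart d)
    (q.coeff d * ∫ y, ∏ j : Fin m, (y j) ^ (d (Sum.inr j)) ∂ν)

/-- All polynomial moments of `ν` are finite. -/
def momentsFinite {m : ℕ} (ν : Measure (Fin m → ℝ)) : Prop :=
  ∀ h : MvPolynomial (Fin m) ℝ, Integrable (fun y => |MvPolynomial.eval y h|) ν

/-- `ν` has support exactly `Y`. -/
def hasSupport {m : ℕ} (ν : Measure (Fin m → ℝ)) (Y : Set (Fin m → ℝ)) : Prop :=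
  ν Yᶜ = 0 ∧ ∀ U : Set (Fin m → ℝ), IsOpen U → (U ∩ Y).Nonempty → 0 < ν U

/-- The multivariate Carleman condition on `ν`. -/
def Carleman {m : ℕ} (ν : Measure (Fin m → ℝ)) : Prop :=
  ∀ j : Fin m, ¬ Summable (fun d : ℕ =>
    (∫ y, (y j) ^ (2 * (d + 1)) ∂ν) ^ (-(1 : ℝ) / (2 * (d + 1))))

/-- Evaluate a polynomial matrix at a point. -/
def evalMat {σ : Type*} {ι : Type*} (x : σ → ℝ)
    (M : Matrix ι ι (MvPolynomial σ ℝ)) : Matrix ι ι ℝ :=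
  M.map (MvPolynomial.eval x)

/-- The spectral (L²-operator) norm of a real matrix. -/
def specNorm {ι : Type*} [Fintype ι] [DecidableEq ι] (A : Matrix ι ι ℝ) : ℝ :=
  ‖(Matrix.toEuclideanLin A).toContinuousLinearMap‖

/-- Degree of a polynomial matrix. -/
def matDeg {ι σ : Type*} [Fintype ι] (M : Matrix ι ι (MvPolynomial σ ℝ)) : ℕ :=
  Finset.univ.sup fun i => Finset.univ.sup fun j => (M i j).totalDegree

/-- Degree in `x` of a polynomial in `(x,y)`. -/
def degX {n m : ℕ} (q : MvPolynomial (Fin n ⊕ Fin m) ℝ) : ℕ :=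
  q.support.sup fun d => ∑ i : Fin n, d (Sum.inl i)

/-- Degree in `y` of a polynomial in `(x,y)`. -/
def degY {n m : ℕ} (q : MvPolynomial (Fin n ⊕ Fin m) ℝ) : ℕ :=
  q.support.sup fun d => ∑ j : Fin m, d (Sum.inr j)

def matDegX {ι : Type*} {n m : ℕ} [Fintype ι]
    (M : Matrix ι ι (MvPolynomial (Fin n ⊕ Fin m) ℝ)) : ℕ :=
  Finset.univ.sup fun i => Finset.univ.sup fun j => degX (M i j)

def matDegY {ι : Type*} {n m : ℕ} [Fintype ι]
    (M : Matrix ι ι (MvPolynomial (Fin n ⊕ Fin m) ℝ)) : ℕ :=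
  Finset.univ.sup fun i => Finset.univ.sup fun j => degY (M i j)

/-- Homogeneity in `x` of a polynomial in `(x,y)`. -/
def IsHomogeneousX {n m : ℕ} (q : MvPolynomial (Fin n ⊕ Fin m) ℝ) (k : ℕ) : Prop :=
  ∀ d ∈ q.support, ∑ i : Fin n, d (Sum.inl i) = k

/-- Positive semidefiniteness of the full (infinite) moment matrix `M(S)`:
every finite principal block submatrix is PSD. -/
def MomentPSD {n p : ℕ} (S : (Fin n →₀ ℕ) → Matrix (Fin p) (Fin p) ℝ) : Prop :=
  ∀ (N : ℕ) (idx : Fin N → (Fin n →₀ ℕ)),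
    (Matrix.of fun a b : Fin N × Fin p => S (idx a.1 + idx b.1) a.2 b.2).PosSemidef

/-- Exponents of degree at most `d` in `n` variables. -/
def Expo (n d : ℕ) := {a : Fin n → Fin (d + 1) // ∑ i, (a i : ℕ) ≤ d}

instance (n d : ℕ) : Fintype (Expo n d) := by unfold Expo; infer_instance
instance (n d : ℕ) : DecidableEq (Expo n d) := by unfold Expo; infer_instance

def expF {n d : ℕ} (a : Fin n → Fin (d + 1)) : Fin n →₀ ℕ :=
  Finsupp.equivFunOnFinite.symm (fun i => (a i : ℕ))

/-- Truncated moment matrix `M_d(S)`. -/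
def momentMat {n p : ℕ} (S : (Fin n →₀ ℕ) → Matrix (Fin p) (Fin p) ℝ) (d : ℕ) :
    Matrix (Expo n d × Fin p) (Expo n d × Fin p) ℝ :=
  Matrix.of fun a b => S (expF a.1.1 + expF b.1.1) a.2 b.2

/-- Truncated localizing matrix `M^ν_{d,k}(G S)`. -/
def locMat {n m p q : ℕ} (ν : Measure (Fin m → ℝ))
    (G : Matrix (Fin q) (Fin q) (MvPolynomial (Fin n ⊕ Fin m) ℝ))
    (S : (Fin n →₀ ℕ) → Matrix (Fin p) (Fin p) ℝ) (d k : ℕ) :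
    Matrix ((Expo n d × Expo m k) × (Fin p × Fin q))
           ((Expo n d × Expo m k) × (Fin p × Fin q)) ℝ :=
  Matrix.of fun r c =>
    ∑ e ∈ (G r.2.2 c.2.2).support,
      (∫ y, ∏ j : Fin m, (y j) ^ (e (Sum.inr j) + (r.1.2.1 j : ℕ) + (c.1.2.1 j : ℕ)) ∂ν) *
      ((G r.2.2 c.2.2).coeff e *
        S (expF r.1.1.1 + expF c.1.1.1 + xPart e) r.2.1 c.2.1)

/-- The Riesz functional `L_S(H) = Σ_α tr(H_α S_α)`. -/
def RieszL {n p : ℕ} (S : (Fin n →₀ ℕ) → Matrix (Fin p) (Fin p) ℝ)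
    (H : Matrix (Fin p) (Fin p) (MvPolynomial (Fin n) ℝ)) : ℝ :=
  ∑ i, ∑ j, ∑ α ∈ (H i j).support, (H i j).coeff α * S α j i

end


noncomputable section SOSAuxSec
namespace SOSAux
open MeasureTheory MvPolynomial Matrix Finset
open scoped Classical

variable {n m : ℕ}

def yPart {n m : ℕ} (d : (Fin n ⊕ Fin m) →₀ ℕ) : Fin m →₀ ℕ :=
  Finsupp.comapDomain Sum.inr d Sum.inr_injective.injOn

def mu (ν : Measure (Fin m → ℝ)) (β : Fin m →₀ ℕ) : ℝ :=
  ∫ y, ∏ j : Fin m, (y j) ^ (β j) ∂ν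

lemma xPart_add (d e : (Fin n ⊕ Fin m) →₀ ℕ) : xPart (d + e) = xPart d + xPart e := by
  ext i; simp [xPart, Finsupp.comapDomain_apply]

lemma yPart_add (d e : (Fin n ⊕ Fin m) →₀ ℕ) : yPart (d + e) = yPart d + yPart e := by
  ext j; simp [yPart, Finsupp.comapDomain_apply]

lemma integY_eq (ν : Measure (Fin m → ℝ)) (p : MvPolynomial (Fin n ⊕ Fin m) ℝ) :
    integY ν p = ∑ d ∈ p.support, monomial (xPart d) (p.coeff d * mu ν (yPart d)) := by
  unfold integY mu
  refine Finset.sum_congr rfl fun d _ => rfl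

lemma integY_eq_sum_subset (ν : Measure (Fin m → ℝ)) (p : MvPolynomial (Fin n ⊕ Fin m) ℝ)
    {s : Finset ((Fin n ⊕ Fin m) →₀ ℕ)} (hs : p.support ⊆ s) :
    integY ν p = ∑ d ∈ s, monomial (xPart d) (p.coeff d * mu ν (yPart d)) := by
  rw [integY_eq]
  exact Finset.sum_subset hs (fun d _ hd => by
    simp [MvPolynomial.notMem_support_iff.mp hd])

lemma integY_zero (ν : Measure (Fin m → ℝ)) :
    integY ν (0 : MvPolynomial (Fin n ⊕ Fin m) ℝ) = 0 := by
  simp [integY_eq]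

lemma integY_add (ν : Measure (Fin m → ℝ)) (p q : MvPolynomial (Fin n ⊕ Fin m) ℝ) :
    integY ν (p + q) = integY ν p + integY ν q := by
  have hs : (p + q).support ⊆ p.support ∪ q.support := MvPolynomial.support_add
  rw [integY_eq_sum_subset ν (p + q) hs,
      integY_eq_sum_subset ν p (Finset.subset_union_left),
      integY_eq_sum_subset ν q (Finset.subset_union_right),
      ← Finset.sum_add_distrib]
  refine Finset.sum_congr rfl fun d _ => ?_
  rw [MvPolynomial.coeff_add, add_mul, map_add]

lemma integY_sum (ν : Measure (Fin m → ℝ)) {ι : Type*} (s : Finset ι)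
    (f : ι → MvPolynomial (Fin n ⊕ Fin m) ℝ) :
    integY ν (∑ i ∈ s, f i) = ∑ i ∈ s, integY ν (f i) := by
  classical
  induction s using Finset.induction with
  | empty => simp [integY_zero]
  | insert _ _ h ih => rw [Finset.sum_insert h, Finset.sum_insert h, integY_add, ih]

lemma integY_monomial (ν : Measure (Fin m → ℝ)) (d : (Fin n ⊕ Fin m) →₀ ℕ) (c : ℝ) :
    integY ν (monomial d c) = monomial (xPart d) (c * mu ν (yPart d)) := by
  rcases eq_or_ne c 0 with h | h
  · simp [h, integY_zero]
  · rw [integY_eq, MvPolynomial.support_monomial, if_neg h, Finset.sum_singleton,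
      MvPolynomial.coeff_monomial, if_pos rfl]

def proj (β : Fin m →₀ ℕ) (p : MvPolynomial (Fin n ⊕ Fin m) ℝ) : MvPolynomial (Fin n) ℝ :=
  ∑ d ∈ p.support.filter (fun d => yPart d = β), monomial (xPart d) (p.coeff d)

lemma integY_mul (ν : Measure (Fin m → ℝ)) (p q : MvPolynomial (Fin n ⊕ Fin m) ℝ)
    (B : Finset (Fin m →₀ ℕ))
    (hp : ∀ d ∈ p.support, yPart d ∈ B) (hq : ∀ d ∈ q.support, yPart d ∈ B) :
    integY ν (p * q) =
      ∑ β ∈ B, ∑ γ ∈ B, MvPolynomial.C (mu ν (β + γ)) * (proj β p * proj γ q) := by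
  classical
  set F : ((Fin n ⊕ Fin m) →₀ ℕ) → ((Fin n ⊕ Fin m) →₀ ℕ) → MvPolynomial (Fin n) ℝ :=
    fun d e => MvPolynomial.C (mu ν (yPart d + yPart e)) *
      (monomial (xPart d) (p.coeff d) * monomial (xPart e) (q.coeff e)) with hF
  have hA : integY ν (p * q) = ∑ d ∈ p.support, ∑ e ∈ q.support, F d e := by
    conv_lhs => rw [p.as_sum, q.as_sum]
    rw [Finset.sum_mul_sum, integY_sum]
    refine Finset.sum_congr rfl fun d _ => ?_
    rw [integY_sum]
    refine Finset.sum_congr rfl fun e _ => ?_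
    rw [MvPolynomial.monomial_mul, integY_monomial, xPart_add, yPart_add]
    simp only [hF]
    rw [MvPolynomial.monomial_mul, MvPolynomial.C_mul_monomial]
    congr 1
    ring
  rw [hA]
  have hB : ∀ β ∈ B, ∀ γ ∈ B,
      MvPolynomial.C (mu ν (β + γ)) * (proj β p * proj γ q) =
      ∑ d ∈ p.support.filter (fun d => yPart d = β),
        ∑ e ∈ q.support.filter (fun e => yPart e = γ), F d e := by
    intro β hβ γ hγ
    unfold proj
    rw [Finset.sum_mul_sum, Finset.mul_sum]
    refine Finset.sum_congr rfl fun d hd => ?_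
    rw [Finset.mul_sum]
    refine Finset.sum_congr rfl fun e he => ?_
    simp only [hF]
    rw [(Finset.mem_filter.mp hd).2, (Finset.mem_filter.mp he).2]
  rw [Finset.sum_congr rfl (fun β hβ => Finset.sum_congr rfl (fun γ hγ => hB β hβ γ hγ))]
  symm
  calc ∑ β ∈ B, ∑ γ ∈ B, ∑ d ∈ p.support.filter (fun d => yPart d = β),
        ∑ e ∈ q.support.filter (fun e => yPart e = γ), F d e
      = ∑ β ∈ B, ∑ d ∈ p.support.filter (fun d => yPart d = β),
        ∑ γ ∈ B, ∑ e ∈ q.support.filter (fun e => yPart e = γ), F d e := by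
        exact Finset.sum_congr rfl fun β _ => Finset.sum_comm
    _ = ∑ β ∈ B, ∑ d ∈ p.support.filter (fun d => yPart d = β),
        ∑ e ∈ q.support, F d e := by
        refine Finset.sum_congr rfl fun β _ => Finset.sum_congr rfl fun d _ => ?_
        exact Finset.sum_fiberwise_of_maps_to hq _
    _ = ∑ d ∈ p.support, ∑ e ∈ q.support, F d e :=
        Finset.sum_fiberwise_of_maps_to hp _

lemma integrable_mono (ν : Measure (Fin m → ℝ)) (hmom : momentsFinite ν) (k : Fin m →₀ ℕ) :
    Integrable (fun y : Fin m → ℝ => ∏ j : Fin m, (y j) ^ (k j)) ν := by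
  have h := hmom (monomial k 1)
  have heq : (fun y : Fin m → ℝ => |MvPolynomial.eval y (monomial k (1:ℝ))|)
      = fun y => |∏ j : Fin m, (y j) ^ (k j)| := by
    funext y
    rw [MvPolynomial.eval_monomial, one_mul, Finsupp.prod_pow]
  rw [heq] at h
  have hmeas : AEStronglyMeasurable (fun y : Fin m → ℝ => ∏ j : Fin m, (y j) ^ (k j)) ν := by
    refine Continuous.aestronglyMeasurable ?_
    exact continuous_finset_prod _ fun j _ => (continuous_apply j).pow _
  refine ⟨hmeas, ?_⟩
  have h2 : HasFiniteIntegral (fun y : Fin m → ℝ => ‖∏ j : Fin m, (y j) ^ (k j)‖) ν := by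
    have h3 := h.hasFiniteIntegral
    simp only [← Real.norm_eq_abs] at h3
    exact h3
  exact (hasFiniteIntegral_norm_iff _).mp h2

lemma mom_psd (ν : Measure (Fin m → ℝ)) (hmom : momentsFinite ν)
    (B : Finset (Fin m →₀ ℕ)) :
    (Matrix.of fun β γ : ↑B => mu ν (↑β + ↑γ)).PosSemidef := by
  refine Matrix.PosSemidef.of_dotProduct_mulVec_nonneg ?_ ?_
  · ext β γ
    simp only [Matrix.conjTranspose_apply, Matrix.of_apply, star_trivial]
    rw [add_comm]
  · intro x
    have key : (star x) ⬝ᵥ ((Matrix.of fun β γ : ↑B => mu ν (↑β + ↑γ)) *ᵥ x)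
        = ∫ y, (∑ β : ↑B, x β * ∏ j : Fin m, (y j) ^ ((β : Fin m →₀ ℕ) j)) ^ 2 ∂ν := by
      have hsq : ∀ y : Fin m → ℝ,
          (∑ β : ↑B, x β * ∏ j : Fin m, (y j) ^ ((β : Fin m →₀ ℕ) j)) ^ 2
          = ∑ β : ↑B, ∑ γ : ↑B, (x β * x γ) *
              ∏ j : Fin m, (y j) ^ (((β : Fin m →₀ ℕ) + γ) j) := by
        intro y
        rw [sq, Finset.sum_mul_sum]
        refine Finset.sum_congr rfl fun β _ => Finset.sum_congr rfl fun γ _ => ?_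
        simp only [Finsupp.add_apply, pow_add, Finset.prod_mul_distrib]
        ring
      rw [MeasureTheory.integral_congr_ae (Filter.Eventually.of_forall hsq)]
      rw [MeasureTheory.integral_finset_sum _ (fun β _ =>
        MeasureTheory.integrable_finset_sum _ (fun γ _ =>
          ((integrable_mono ν hmom _).const_mul _)))]
      simp only [dotProduct, Matrix.mulVec, Matrix.of_apply, star_trivial, dotProduct]
      refine Finset.sum_congr rfl fun β _ => ?_
      rw [MeasureTheory.integral_finset_sum _ (fun γ _ =>
          ((integrable_mono ν hmom _).const_mul _))]
      rw [Finset.mul_sum]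
      refine Finset.sum_congr rfl fun γ _ => ?_
      rw [MeasureTheory.integral_const_mul]
      unfold mu
      ring
    rw [key]
    exact MeasureTheory.integral_nonneg fun y => sq_nonneg _

lemma mom_factor (ν : Measure (Fin m → ℝ)) (hmom : momentsFinite ν)
    (B : Finset (Fin m →₀ ℕ)) :
    ∃ Cm : Matrix ↑B ↑B ℝ, ∀ β γ : ↑B, mu ν (↑β + ↑γ) = ∑ r : ↑B, Cm r β * Cm r γ := by
  obtain ⟨Cm, hCm⟩ : ∃ Cm : Matrix ↑B ↑B ℝ,
      (Matrix.of fun β γ : ↑B => mu ν (↑β + ↑γ)) = Cmᴴ * Cm := by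
    open scoped MatrixOrder in
    exact ⟨CFC.sqrt (Matrix.of fun β γ : ↑B => mu ν (↑β + ↑γ)), by
      rw [(CFC.sqrt_nonneg _).posSemidef.1.eq,
        CFC.sqrt_mul_sqrt_self _ (mom_psd ν hmom B).nonneg]⟩
  refine ⟨Cm, fun β γ => ?_⟩
  have := congrFun (congrFun hCm β) γ
  simp only [Matrix.of_apply, Matrix.mul_apply, Matrix.conjTranspose_apply, star_trivial] at this
  exact this

lemma isSOSMatrix_of_fintype {σ : Type*} {q : ℕ} {ι : Type*} [Fintype ι]
    (M : Matrix (Fin q) (Fin q) (MvPolynomial σ ℝ))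
    (W : Matrix ι (Fin q) (MvPolynomial σ ℝ)) (h : M = Wᵀ * W) :
    IsSOSMatrix M := by
  classical
  obtain ⟨e⟩ : Nonempty (ι ≃ Fin (Fintype.card ι)) := ⟨Fintype.equivFin ι⟩
  refine ⟨Fintype.card ι, W.submatrix e.symm id, ?_⟩
  subst h
  refine Matrix.ext fun i j => ?_
  simp only [Matrix.mul_apply, Matrix.transpose_apply, Matrix.submatrix_apply, id_eq]
  exact (Equiv.sum_comp e.symm fun k => W k i * W k j).symm

end SOSAux
end SOSAuxSec

/-- integrating out `y` against `ν` in an SOS polynomial matrix in `(x,y)`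
yields an SOS polynomial matrix in `x`. -/
theorem sos_integY {n m q : ℕ} (Y : Set (Fin m → ℝ)) (hY : IsClosed Y)
    (ν : Measure (Fin m → ℝ)) (hsupp : hasSupport ν Y) (hmom : momentsFinite ν)
    (Sig : Matrix (Fin q) (Fin q) (MvPolynomial (Fin n ⊕ Fin m) ℝ))
    (hSig : IsSOSMatrix Sig) :
    IsSOSMatrix (Sig.map (integY ν)) := by
  classical
  obtain ⟨l, T, hT⟩ := hSig
  set B : Finset (Fin m →₀ ℕ) :=
    Finset.univ.biUnion (fun li : Fin l × Fin q => (T li.1 li.2).support.image SOSAux.yPart)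
    with hBdef
  have hB : ∀ (a : Fin l) (i : Fin q), ∀ d ∈ (T a i).support, SOSAux.yPart d ∈ B := by
    intro a i d hd
    exact Finset.mem_biUnion.mpr ⟨(a, i), Finset.mem_univ _, Finset.mem_image_of_mem _ hd⟩
  obtain ⟨Cm, hCm⟩ := SOSAux.mom_factor ν hmom B
  refine SOSAux.isSOSMatrix_of_fintype _ (Matrix.of fun (lr : Fin l × ↑B) (i : Fin q) =>
    ∑ β : ↑B, MvPolynomial.C (Cm lr.2 β) * SOSAux.proj (↑β) (T lr.1 i)) ?_
  refine Matrix.ext fun i j => ?_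
  have hL : (Sig.map (integY ν)) i j
      = ∑ a : Fin l, ∑ β ∈ B, ∑ γ ∈ B,
          MvPolynomial.C (SOSAux.mu ν (β + γ)) *
            (SOSAux.proj β (T a i) * SOSAux.proj γ (T a j)) := by
    rw [Matrix.map_apply, hT, Matrix.mul_apply, SOSAux.integY_sum]
    refine Finset.sum_congr rfl fun a _ => ?_
    rw [Matrix.transpose_apply]
    exact SOSAux.integY_mul ν (T a i) (T a j) B (hB a i) (hB a j)
  rw [hL, Matrix.mul_apply]
  rw [Fintype.sum_prod_type]
  refine Finset.sum_congr rfl fun a _ => ?_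
  -- RHS: ∑ r : ↑B, Wᵀ i (a,r) * W (a,r) j
  simp only [Matrix.transpose_apply, Matrix.of_apply]
  have hstep : ∀ r : ↑B,
      (∑ β : ↑B, MvPolynomial.C (Cm r β) * SOSAux.proj (↑β) (T a i)) *
      (∑ γ : ↑B, MvPolynomial.C (Cm r γ) * SOSAux.proj (↑γ) (T a j)) =
      ∑ β : ↑B, ∑ γ : ↑B,
        (MvPolynomial.C (Cm r β) * SOSAux.proj (↑β) (T a i)) *
        (MvPolynomial.C (Cm r γ) * SOSAux.proj (↑γ) (T a j)) := by
    intro r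
    rw [Finset.sum_mul_sum]
  simp only [hstep]
  have hinner : ∀ β γ : ↑B,
      (∑ r : ↑B, MvPolynomial.C (Cm r β) * SOSAux.proj (↑β) (T a i) *
        (MvPolynomial.C (Cm r γ) * SOSAux.proj (↑γ) (T a j))) =
      MvPolynomial.C (SOSAux.mu ν (↑β + ↑γ)) *
        (SOSAux.proj (↑β) (T a i) * SOSAux.proj (↑γ) (T a j)) := by
    intro β γ
    rw [hCm β γ, map_sum, Finset.sum_mul]
    refine Finset.sum_congr rfl fun r _ => ?_
    rw [MvPolynomial.C_mul]
    ring
  refine Eq.symm ?_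
  calc ∑ r : ↑B, ∑ β : ↑B, ∑ γ : ↑B,
        MvPolynomial.C (Cm r β) * SOSAux.proj (↑β) (T a i) *
          (MvPolynomial.C (Cm r γ) * SOSAux.proj (↑γ) (T a j))
      = ∑ β : ↑B, ∑ r : ↑B, ∑ γ : ↑B,
        MvPolynomial.C (Cm r β) * SOSAux.proj (↑β) (T a i) *
          (MvPolynomial.C (Cm r γ) * SOSAux.proj (↑γ) (T a j)) := Finset.sum_comm
    _ = ∑ β : ↑B, ∑ γ : ↑B, ∑ r : ↑B,
        MvPolynomial.C (Cm r β) * SOSAux.proj (↑β) (T a i) *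
          (MvPolynomial.C (Cm r γ) * SOSAux.proj (↑γ) (T a j)) :=
        Finset.sum_congr rfl fun β _ => Finset.sum_comm
    _ = ∑ β : ↑B, ∑ γ : ↑B,
        MvPolynomial.C (SOSAux.mu ν (↑β + ↑γ)) *
          (SOSAux.proj (↑β) (T a i) * SOSAux.proj (↑γ) (T a j)) :=
        Finset.sum_congr rfl fun β _ => Finset.sum_congr rfl fun γ _ => hinner β γ
    _ = ∑ β ∈ B, ∑ γ ∈ B,
        MvPolynomial.C (SOSAux.mu ν (β + γ)) *
          (SOSAux.proj β (T a i) * SOSAux.proj γ (T a j)) := by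
        rw [← Finset.sum_coe_sort B (fun β => ∑ γ ∈ B, MvPolynomial.C (SOSAux.mu ν (β + γ)) *
          (SOSAux.proj β (T a i) * SOSAux.proj γ (T a j)))]
        refine Finset.sum_congr rfl fun β _ => ?_
        rw [← Finset.sum_coe_sort B (fun γ => MvPolynomial.C (SOSAux.mu ν (↑β + γ)) *
          (SOSAux.proj (↑β) (T a i) * SOSAux.proj γ (T a j)))]
end

section
/- Let h ∈ ℝ[x] be a nonnegative combination of the form h = σ₀ + Σ_j ∫_Y ⟨Σ_j, G_j⟩ dν(y) with σ₀ an SOS polynomial and each Σ_j ∈ S[x,y]^{q_j} an SOS matrix, and let S(x) ∈ S[x]^p be an SOS matrix. Then the product S(x)·h(x) admits a representation S h = Σ₀ + Σ_j ∫_Y ⟨Σ'_j, G_j⟩_p dν(y) with Σ₀ ∈ S[x]^p an SOS matrix and each Σ'_j ∈ S[x,y]^{p q_j} an SOS matrix; concretely one may take Σ₀ = S σ₀ and Σ'_j = S ⊗ Σ_j. -/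
open MeasureTheory MvPolynomial Matrix Finset

section AuxSQM

/-- The moment `∫ y^{d_y} dν` corresponding to the `y`-part of an exponent `d`. -/
noncomputable def momSQM {n m : ℕ} (ν : Measure (Fin m → ℝ))
    (d : (Fin n ⊕ Fin m) →₀ ℕ) : ℝ :=
  ∫ y, ∏ j : Fin m, (y j) ^ (d (Sum.inr j)) ∂ν

lemma integY_def' {n m : ℕ} (ν : Measure (Fin m → ℝ)) (q : MvPolynomial (Fin n ⊕ Fin m) ℝ) :
    integY ν q = ∑ d ∈ q.support, MvPolynomial.monomial (xPart d) (q.coeff d * momSQM ν d) :=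
  rfl

lemma integY_eq_sum {n m : ℕ} (ν : Measure (Fin m → ℝ)) (q : MvPolynomial (Fin n ⊕ Fin m) ℝ)
    (A : Finset ((Fin n ⊕ Fin m) →₀ ℕ)) (hA : q.support ⊆ A) :
    integY ν q = ∑ d ∈ A, MvPolynomial.monomial (xPart d) (q.coeff d * momSQM ν d) := by
  rw [integY_def']
  refine Finset.sum_subset hA fun d _ hd => ?_
  rw [MvPolynomial.notMem_support_iff.mp hd, zero_mul, map_zero]

lemma integY_add {n m : ℕ} (ν : Measure (Fin m → ℝ)) (pq₁ pq₂ : MvPolynomial (Fin n ⊕ Fin m) ℝ) :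
    integY ν (pq₁ + pq₂) = integY ν pq₁ + integY ν pq₂ := by
  classical
  rw [integY_eq_sum ν (pq₁ + pq₂) (pq₁.support ∪ pq₂.support) MvPolynomial.support_add,
      integY_eq_sum ν pq₁ (pq₁.support ∪ pq₂.support) Finset.subset_union_left,
      integY_eq_sum ν pq₂ (pq₁.support ∪ pq₂.support) Finset.subset_union_right,
      ← Finset.sum_add_distrib]
  refine Finset.sum_congr rfl fun d _ => ?_
  rw [MvPolynomial.coeff_add, add_mul, map_add]

lemma integY_zero {n m : ℕ} (ν : Measure (Fin m → ℝ)) :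
    integY (n := n) ν 0 = 0 := by
  simp [integY]

lemma integY_finsum {n m : ℕ} (ν : Measure (Fin m → ℝ)) {ι : Type*} (t : Finset ι)
    (f : ι → MvPolynomial (Fin n ⊕ Fin m) ℝ) :
    integY ν (∑ i ∈ t, f i) = ∑ i ∈ t, integY ν (f i) := by
  classical
  induction t using Finset.cons_induction with
  | empty => simpa using integY_zero (n := n) ν
  | cons a t ha ih => rw [Finset.sum_cons, Finset.sum_cons, integY_add, ih]

lemma xPart_add {n m : ℕ} (a b : (Fin n ⊕ Fin m) →₀ ℕ) :
    xPart (a + b) = xPart a + xPart b := by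
  ext i
  simp [xPart]

lemma xPart_mapDomain_inl {n m : ℕ} (α : Fin n →₀ ℕ) :
    xPart (n := n) (m := m) (Finsupp.mapDomain Sum.inl α) = α := by
  ext i
  simp [xPart, Finsupp.mapDomain_apply Sum.inl_injective]

lemma mapDomain_inl_apply_inr {n m : ℕ} (α : Fin n →₀ ℕ) (j : Fin m) :
    Finsupp.mapDomain (Sum.inl : Fin n → Fin n ⊕ Fin m) α (Sum.inr j) = 0 := by
  refine Finsupp.mapDomain_notin_range _ _ ?_
  rintro ⟨i, hi⟩
  exact Sum.inl_ne_inr hi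

lemma momSQM_inl_add {n m : ℕ} (ν : Measure (Fin m → ℝ)) (α : Fin n →₀ ℕ)
    (d : (Fin n ⊕ Fin m) →₀ ℕ) :
    momSQM ν (Finsupp.mapDomain Sum.inl α + d) = momSQM ν d := by
  unfold momSQM
  simp only [Finsupp.add_apply, mapDomain_inl_apply_inr, zero_add]

lemma integY_monomial_mul {n m : ℕ} (ν : Measure (Fin m → ℝ)) (α : Fin n →₀ ℕ) (c : ℝ)
    (q : MvPolynomial (Fin n ⊕ Fin m) ℝ) :
    integY ν (MvPolynomial.monomial (Finsupp.mapDomain Sum.inl α) c * q)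
      = MvPolynomial.monomial α c * integY ν q := by
  classical
  set β := Finsupp.mapDomain (Sum.inl : Fin n → Fin n ⊕ Fin m) α with hβ
  have hsub : (MvPolynomial.monomial β c * q).support ⊆ q.support.image (β + ·) := by
    intro d hd
    rw [MvPolynomial.mem_support_iff, MvPolynomial.coeff_monomial_mul'] at hd
    by_cases hle : β ≤ d
    · simp only [hle, if_true] at hd
      refine Finset.mem_image.mpr ⟨d - β, ?_, add_tsub_cancel_of_le hle⟩
      rw [MvPolynomial.mem_support_iff]
      exact fun h0 => hd (by rw [h0, mul_zero])
    · simp [hle] at hd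
  rw [integY_eq_sum ν _ _ hsub,
      Finset.sum_image (fun x _ y _ hxy => by exact add_left_cancel hxy),
      integY_def', Finset.mul_sum]
  refine Finset.sum_congr rfl fun d _ => ?_
  rw [MvPolynomial.coeff_monomial_mul, xPart_add, xPart_mapDomain_inl, momSQM_inl_add,
      MvPolynomial.monomial_mul, mul_assoc]

lemma integY_rename_mul {n m : ℕ} (ν : Measure (Fin m → ℝ)) (f : MvPolynomial (Fin n) ℝ)
    (q : MvPolynomial (Fin n ⊕ Fin m) ℝ) :
    integY ν (MvPolynomial.rename Sum.inl f * q) = f * integY ν q := by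
  classical
  have h1 : MvPolynomial.rename (Sum.inl : Fin n → Fin n ⊕ Fin m) f
      = ∑ v ∈ f.support,
          MvPolynomial.monomial (Finsupp.mapDomain Sum.inl v) (f.coeff v) := by
    conv_lhs => rw [f.as_sum]
    rw [map_sum]
    exact Finset.sum_congr rfl fun v _ => MvPolynomial.rename_monomial _ _ _
  rw [h1, Finset.sum_mul, integY_finsum]
  calc ∑ v ∈ f.support,
        integY ν (MvPolynomial.monomial (Finsupp.mapDomain Sum.inl v) (f.coeff v) * q)
      = ∑ v ∈ f.support, MvPolynomial.monomial v (f.coeff v) * integY ν q :=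
        Finset.sum_congr rfl fun v _ => integY_monomial_mul ν v _ q
    _ = f * integY ν q := by rw [← Finset.sum_mul, ← f.as_sum]

end AuxSQM

/-- multiplying a member of the scalar quadratic module by an SOS matrix
stays in the matrix quadratic module. -/
theorem smul_quadratic_module {n m p s : ℕ} (qd : Fin s → ℕ)
    (Y : Set (Fin m → ℝ)) (hY : IsClosed Y)
    (ν : Measure (Fin m → ℝ)) (hsupp : hasSupport ν Y) (hmom : momentsFinite ν)
    (G : ∀ j, Matrix (Fin (qd j)) (Fin (qd j)) (MvPolynomial (Fin n ⊕ Fin m) ℝ))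
    (hGs : ∀ j, (G j).IsSymm)
    (h σ₀ : MvPolynomial (Fin n) ℝ) (hσ₀ : IsSOSPoly σ₀)
    (Sg : ∀ j, Matrix (Fin (qd j)) (Fin (qd j)) (MvPolynomial (Fin n ⊕ Fin m) ℝ))
    (hSg : ∀ j, IsSOSMatrix (Sg j))
    (hh : h = σ₀ + ∑ j, integY ν (Matrix.trace ((Sg j)ᵀ * G j)))
    (S : Matrix (Fin p) (Fin p) (MvPolynomial (Fin n) ℝ)) (hS : IsSOSMatrix S) :
    ∃ (S0 : Matrix (Fin p) (Fin p) (MvPolynomial (Fin n) ℝ))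
      (Sg' : ∀ j, Matrix (Fin p × Fin (qd j)) (Fin p × Fin (qd j))
        (MvPolynomial (Fin n ⊕ Fin m) ℝ)),
      IsSOSMatrix S0 ∧ (∀ j, IsSOSMatrix (Sg' j)) ∧
      h • S = S0 + ∑ j, (lram (Sg' j) (G j)).map (integY ν) := by
  classical
  obtain ⟨l0, g, hg⟩ := hσ₀
  obtain ⟨l, T, hT⟩ := hS
  choose lj U hU using hSg
  have hSsymm : ∀ a b, S a b = S b a := by
    intro a b
    rw [hT]
    simp only [Matrix.mul_apply, Matrix.transpose_apply]
    exact Finset.sum_congr rfl fun k _ => mul_comm _ _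
  refine ⟨σ₀ • S,
    fun j => Matrix.of fun r c =>
      MvPolynomial.rename Sum.inl (S r.1 c.1) * Sg j r.2 c.2, ?_, ?_, ?_⟩
  · -- `σ₀ • S` is an SOS matrix
    refine ⟨l0 * l, Matrix.of (fun k j =>
      g (finProdFinEquiv.symm k).1 * T (finProdFinEquiv.symm k).2 j), ?_⟩
    refine Matrix.ext fun a b => ?_
    rw [Matrix.smul_apply, smul_eq_mul, hg, hT]
    simp only [Matrix.mul_apply, Matrix.transpose_apply, Matrix.of_apply]
    rw [Equiv.sum_comp (finProdFinEquiv.symm : Fin (l0 * l) ≃ Fin l0 × Fin l)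
      (fun it => (g it.1 * T it.2 a) * (g it.1 * T it.2 b)), Fintype.sum_prod_type,
      Finset.sum_mul_sum]
    exact Finset.sum_congr rfl fun i _ => Finset.sum_congr rfl fun t _ => by ring
  · -- each `S ⊗ Σ_j` is an SOS matrix
    intro j
    refine ⟨l * lj j, Matrix.of (fun k rc =>
      MvPolynomial.rename Sum.inl (T (finProdFinEquiv.symm k).1 rc.1) *
        U j (finProdFinEquiv.symm k).2 rc.2), ?_⟩
    refine Matrix.ext fun rc rc' => ?_
    simp only [Matrix.mul_apply, Matrix.transpose_apply, Matrix.of_apply]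
    rw [Equiv.sum_comp (finProdFinEquiv.symm : Fin (l * lj j) ≃ Fin l × Fin (lj j))
      (fun it => (MvPolynomial.rename Sum.inl (T it.1 rc.1) * U j it.2 rc.2) *
        (MvPolynomial.rename Sum.inl (T it.1 rc'.1) * U j it.2 rc'.2)),
      Fintype.sum_prod_type, hT, hU j]
    simp only [Matrix.mul_apply, Matrix.transpose_apply, map_sum, _root_.map_mul]
    rw [Finset.sum_mul_sum]
    exact Finset.sum_congr rfl fun t _ => Finset.sum_congr rfl fun u _ => by ring
  · -- the representation identity
    refine Matrix.ext fun i k => ?_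
    simp only [Matrix.add_apply, Matrix.smul_apply, smul_eq_mul, Matrix.sum_apply,
      Matrix.map_apply]
    have hl : ∀ j, lram (Matrix.of fun r c =>
        MvPolynomial.rename Sum.inl (S r.1 c.1) * Sg j r.2 c.2) (G j) i k
        = MvPolynomial.rename Sum.inl (S k i) * ∑ a, ∑ c, Sg j c a * G j c a := by
      intro j
      show (∑ a, ∑ c, (MvPolynomial.rename Sum.inl (S k i) * Sg j c a) * G j c a) = _
      rw [Finset.mul_sum]
      refine Finset.sum_congr rfl fun a _ => ?_
      rw [Finset.mul_sum]
      exact Finset.sum_congr rfl fun c _ => mul_assoc _ _ _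
    have htr : ∀ j, Matrix.trace ((Sg j)ᵀ * G j) = ∑ a, ∑ c, Sg j c a * G j c a := by
      intro j
      simp only [Matrix.trace, Matrix.diag_apply, Matrix.mul_apply, Matrix.transpose_apply]
    calc h * S i k
        = σ₀ * S i k + ∑ j, (S k i * integY ν (∑ a, ∑ c, Sg j c a * G j c a)) := by
          rw [hh, add_mul, Finset.sum_mul]
          congr 1
          refine Finset.sum_congr rfl fun j _ => ?_
          rw [htr j, hSsymm k i, mul_comm]
      _ = σ₀ * S i k + ∑ j, integY ν (lram (Matrix.of fun r c =>
            MvPolynomial.rename Sum.inl (S r.1 c.1) * Sg j r.2 c.2) (G j) i k) := by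
          congr 1
          refine Finset.sum_congr rfl fun j _ => ?_
          rw [hl j, integY_rename_mul]
end

section
/- Let S = (S_α)_{α ∈ ℕⁿ} be a sequence of p×p real symmetric matrices such that the infinite moment matrix M(S) (with (α,β)-block S_{α+β}) is positive semidefinite, and suppose there exist constants C₀, C > 0 with ‖S_α‖ ≤ C₀ C^{|α|} for all α ∈ ℕⁿ (spectral norm). Then ‖S_α‖ ≤ ‖S_0‖ · C^{|α|} ≤ tr(S_0) · C^{|α|} for all α ∈ ℕⁿ. -/
open MeasureTheory MvPolynomial Matrix Finset

noncomputable section MomScalAux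

namespace MomScal

variable {n p : ℕ}

lemma specNorm_nonneg (A : Matrix (Fin p) (Fin p) ℝ) : 0 ≤ specNorm A := by
  unfold specNorm; exact norm_nonneg _

lemma le_of_sq_le_sq' {a b : ℝ} (hb : 0 ≤ b) (h : a ^ 2 ≤ b ^ 2) : a ≤ b := by
  nlinarith [sq_nonneg (a - b), sq_nonneg (a + b)]

lemma eu_norm_sq (x : EuclideanSpace ℝ (Fin p)) : ‖x‖ ^ 2 = ∑ i, x i ^ 2 := by
  rw [EuclideanSpace.norm_eq, Real.sq_sqrt (by positivity)]
  simp [sq_abs]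

lemma toCLM_apply (A : Matrix (Fin p) (Fin p) ℝ) (x : EuclideanSpace ℝ (Fin p)) (i : Fin p) :
    ((Matrix.toEuclideanLin A).toContinuousLinearMap x) i = (A *ᵥ (fun j => x j)) i := rfl

lemma mulVec_sq_le (A : Matrix (Fin p) (Fin p) ℝ) (v : Fin p → ℝ) :
    ∑ i, (A *ᵥ v) i ^ 2 ≤ specNorm A ^ 2 * ∑ i, v i ^ 2 := by
  set x : EuclideanSpace ℝ (Fin p) := (WithLp.equiv 2 (Fin p → ℝ)).symm v
  have hx : ∀ i, x i = v i := fun _ => rfl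
  have h1 : ‖(Matrix.toEuclideanLin A).toContinuousLinearMap x‖ ≤ specNorm A * ‖x‖ :=
    ContinuousLinearMap.le_opNorm _ _
  have h2 : ‖(Matrix.toEuclideanLin A).toContinuousLinearMap x‖ ^ 2 ≤ (specNorm A * ‖x‖) ^ 2 :=
    pow_le_pow_left₀ (norm_nonneg _) h1 2
  rw [eu_norm_sq, mul_pow, eu_norm_sq] at h2
  exact h2

lemma specNorm_le_of (A : Matrix (Fin p) (Fin p) ℝ) {c : ℝ} (hc : 0 ≤ c)
    (h : ∀ v : Fin p → ℝ, ∑ i, (A *ᵥ v) i ^ 2 ≤ c ^ 2 * ∑ i, v i ^ 2) : specNorm A ≤ c := by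
  apply ContinuousLinearMap.opNorm_le_bound _ hc
  intro x
  apply le_of_sq_le_sq' (by positivity)
  rw [eu_norm_sq, mul_pow, eu_norm_sq]
  simpa [toCLM_apply] using h (fun j => x j)

lemma even_psd (S : (Fin n →₀ ℕ) → Matrix (Fin p) (Fin p) ℝ) (hPSD : MomentPSD S)
    (γ : Fin n →₀ ℕ) : (S (γ + γ)).PosSemidef := by
  have h := (hPSD 1 (fun _ => γ)).submatrix (fun a : Fin p => ((0 : Fin 1), a))
  convert h using 2
  ext i j; rfl

lemma cross_eq (S : (Fin n →₀ ℕ) → Matrix (Fin p) (Fin p) ℝ)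
    (hsym : ∀ α, (S α).IsSymm) (α : Fin n →₀ ℕ) (u v : Fin p → ℝ) :
    (∑ a, ∑ b, v a * S α a b * u b) = ∑ a, ∑ b, u a * S α a b * v b := by
  rw [Finset.sum_comm]
  exact Finset.sum_congr rfl fun a _ => Finset.sum_congr rfl fun b _ => by
    rw [(hsym α).apply]; ring

lemma cs_psd {A : Matrix (Fin p) (Fin p) ℝ} (hA : A.PosSemidef) (u : Fin p → ℝ) :
    0 ≤ ∑ a, ∑ b, u a * A a b * u b := by
  have h := hA.dotProduct_mulVec_nonneg u
  rw [star_trivial] at h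
  simpa [dotProduct, mulVec, Finset.mul_sum, mul_assoc] using h

lemma quad_key (S : (Fin n →₀ ℕ) → Matrix (Fin p) (Fin p) ℝ) (hPSD : MomentPSD S)
    (α : Fin n →₀ ℕ) (u v : Fin p → ℝ) (t : ℝ) :
    0 ≤ (∑ a, ∑ b, u a * S 0 a b * u b) * (t * t) +
        ((∑ a, ∑ b, u a * S α a b * v b) + (∑ a, ∑ b, v a * S α a b * u b)) * t +
        (∑ a, ∑ b, v a * S (α + α) a b * v b) := by
  have h := (hPSD 2 ![0, α]).dotProduct_mulVec_nonneg (fun z : Fin 2 × Fin p => if z.1 = 0 then t * u z.2 else v z.2)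
  rw [star_trivial] at h
  simp only [dotProduct, mulVec, Fintype.sum_prod_type, Fin.sum_univ_two,
    Matrix.of_apply, Matrix.cons_val_zero, Matrix.cons_val_one, Matrix.head_cons,
    ite_true, ite_false, if_pos rfl, zero_add, add_zero, Fin.one_eq_zero_iff,
    OfNat.ofNat_ne_one, if_neg (by decide : ¬ (1 : Fin 2) = 0)] at h
  calc (0:ℝ) ≤ _ := h
    _ = _ := by
      simp only [Finset.mul_sum, Finset.sum_mul, mul_add, add_mul,
        Finset.sum_add_distrib, ite_true, ite_false]
      ring_nf

lemma qform_le (A : Matrix (Fin p) (Fin p) ℝ) (u : Fin p → ℝ) :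
    ∑ a, ∑ b, u a * A a b * u b ≤ specNorm A * ∑ i, u i ^ 2 := by
  have hQ : (∑ a, ∑ b, u a * A a b * u b) = ∑ a, u a * (A *ᵥ u) a := by
    simp [mulVec, dotProduct, Finset.mul_sum, mul_assoc]
  rw [hQ]
  apply le_of_sq_le_sq' (mul_nonneg (specNorm_nonneg A) (by positivity))
  calc (∑ a, u a * (A *ᵥ u) a) ^ 2
      ≤ (∑ a, u a ^ 2) * ∑ a, (A *ᵥ u) a ^ 2 := Finset.sum_mul_sq_le_sq_mul_sq _ _ _
    _ ≤ (∑ a, u a ^ 2) * (specNorm A ^ 2 * ∑ a, u a ^ 2) := by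
        apply mul_le_mul_of_nonneg_left (mulVec_sq_le A u) (by positivity)
    _ = (specNorm A * ∑ i, u i ^ 2) ^ 2 := by ring

lemma key_ineq (S : (Fin n →₀ ℕ) → Matrix (Fin p) (Fin p) ℝ)
    (hsym : ∀ α, (S α).IsSymm) (hPSD : MomentPSD S) (α : Fin n →₀ ℕ) :
    specNorm (S α) ^ 2 ≤ specNorm (S 0) * specNorm (S (α + α)) := by
  have hf0 : (0:ℝ) ≤ specNorm (S 0) := specNorm_nonneg _
  have hf2 : (0:ℝ) ≤ specNorm (S (α + α)) := specNorm_nonneg _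
  have hmain : specNorm (S α) ≤ Real.sqrt (specNorm (S 0) * specNorm (S (α + α))) := by
    apply specNorm_le_of _ (Real.sqrt_nonneg _)
    intro v
    rw [Real.sq_sqrt (mul_nonneg hf0 hf2)]
    set u : Fin p → ℝ := S α *ᵥ v with hu
    set nu := ∑ i, u i ^ 2 with hnu
    set nv := ∑ i, v i ^ 2 with hnv
    have hnu0 : 0 ≤ nu := by positivity
    have hnv0 : 0 ≤ nv := by positivity
    set q0 := ∑ a, ∑ b, u a * S 0 a b * u b with hq0
    set q2 := ∑ a, ∑ b, v a * S (α + α) a b * v b with hq2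
    set X := ∑ a, ∑ b, u a * S α a b * v b with hX
    have hXnu : X = nu := by
      rw [hX, hnu]
      apply Finset.sum_congr rfl
      intro a _
      rw [show u a ^ 2 = u a * (S α *ᵥ v) a by rw [← hu]; ring]
      simp [mulVec, dotProduct, Finset.mul_sum, mul_assoc]
    have hquad : ∀ t : ℝ, 0 ≤ q0 * (t * t) + (2 * X) * t + q2 := by
      intro t
      have h := quad_key S hPSD α u v t
      rw [cross_eq S hsym α u v] at h
      rw [← hq0, ← hq2, ← hX] at h
      linarith [h]
    have hd := discrim_le_zero hquad
    rw [discrim] at hd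
    have hXsq : X ^ 2 ≤ q0 * q2 := by nlinarith [hd]
    have hq00 : 0 ≤ q0 := by
      rw [hq0]
      have := cs_psd (by simpa using even_psd S hPSD 0) u
      simpa using this
    have hq20 : 0 ≤ q2 := cs_psd (even_psd S hPSD α) v
    have hb0 : q0 ≤ specNorm (S 0) * nu := qform_le (S 0) u
    have hb2 : q2 ≤ specNorm (S (α + α)) * nv := qform_le (S (α + α)) v
    have hchain : nu ^ 2 ≤ (specNorm (S 0) * nu) * (specNorm (S (α + α)) * nv) := by
      calc nu ^ 2 = X ^ 2 := by rw [hXnu]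
        _ ≤ q0 * q2 := hXsq
        _ ≤ (specNorm (S 0) * nu) * (specNorm (S (α + α)) * nv) :=
            mul_le_mul hb0 hb2 hq20 (mul_nonneg hf0 hnu0)
    rcases eq_or_lt_of_le hnu0 with h0 | h0
    · rw [← h0]; positivity
    · have : nu * nu ≤ (specNorm (S 0) * (specNorm (S (α + α)) * nv)) * nu := by nlinarith
      have := le_of_mul_le_mul_right this h0
      calc ∑ i, (S α *ᵥ v) i ^ 2 = nu := rfl
        _ ≤ specNorm (S 0) * (specNorm (S (α + α)) * nv) := this
        _ = specNorm (S 0) * specNorm (S (α + α)) * nv := by ring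
  calc specNorm (S α) ^ 2
      ≤ Real.sqrt (specNorm (S 0) * specNorm (S (α + α))) ^ 2 :=
        pow_le_pow_left₀ (norm_nonneg _) hmain 2
    _ = specNorm (S 0) * specNorm (S (α + α)) := Real.sq_sqrt (mul_nonneg hf0 hf2)

lemma diag_nonneg' {A : Matrix (Fin p) (Fin p) ℝ} (hA : A.PosSemidef) (i : Fin p) :
    0 ≤ A i i := by
  have := cs_psd hA (Pi.single i 1)
  simpa [Pi.single_apply, ite_mul, mul_ite, Finset.sum_ite_eq', Finset.sum_ite_eq] using this

lemma entry_sq {A : Matrix (Fin p) (Fin p) ℝ} (hA : A.PosSemidef) (hs : A.IsSymm)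
    (i j : Fin p) : A i j ^ 2 ≤ A i i * A j j := by
  have hq : ∀ t : ℝ, 0 ≤ A i i * (t * t) + (2 * A i j) * t + A j j := by
    intro t
    have h := cs_psd hA (fun k => t * Pi.single (M := fun _ : Fin p => ℝ) i 1 k + Pi.single (M := fun _ : Fin p => ℝ) j 1 k)
    have hji : A j i = A i j := hs.apply i j
    simp only [Pi.single_apply, mul_ite, mul_one, mul_zero, ite_mul, zero_mul, one_mul,
      add_mul, mul_add, Finset.sum_add_distrib, Finset.sum_ite_eq', Finset.sum_ite_eq,
      Finset.mem_univ, if_true] at h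
    rw [hji] at h
    nlinarith [h]
  have hd := discrim_le_zero hq
  rw [discrim] at hd
  nlinarith [hd]

lemma trace_bound {A : Matrix (Fin p) (Fin p) ℝ} (hA : A.PosSemidef) (hs : A.IsSymm) :
    specNorm A ≤ A.trace := by
  have htr : A.trace = ∑ i, A i i := rfl
  have htr0 : 0 ≤ A.trace := by
    rw [htr]; exact Finset.sum_nonneg fun i _ => diag_nonneg' hA i
  apply specNorm_le_of _ htr0
  intro v
  calc ∑ i, (A *ᵥ v) i ^ 2
      ≤ ∑ i, ((∑ j, A i j ^ 2) * ∑ j, v j ^ 2) := by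
        apply Finset.sum_le_sum
        intro i _
        simpa [mulVec, dotProduct] using Finset.sum_mul_sq_le_sq_mul_sq Finset.univ (fun j => A i j) v
    _ ≤ ∑ i, ((A i i * A.trace) * ∑ j, v j ^ 2) := by
        apply Finset.sum_le_sum
        intro i _
        apply mul_le_mul_of_nonneg_right _ (by positivity)
        calc ∑ j, A i j ^ 2 ≤ ∑ j, A i i * A j j :=
              Finset.sum_le_sum fun j _ => entry_sq hA hs i j
          _ = A i i * A.trace := by rw [htr, Finset.mul_sum]
    _ = A.trace ^ 2 * ∑ j, v j ^ 2 := by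
        rw [← Finset.sum_mul, ← Finset.sum_mul, htr]; ring

end MomScal

end MomScalAux

/-- scaling lemma for exponentially bounded matrix moment sequences. -/
theorem moment_scaling {n p : ℕ} (S : (Fin n →₀ ℕ) → Matrix (Fin p) (Fin p) ℝ)
    (hsym : ∀ α, (S α).IsSymm) (hPSD : MomentPSD S)
    (C₀ C : ℝ) (hC₀ : 0 < C₀) (hC : 0 < C)
    (hbd : ∀ α : Fin n →₀ ℕ, specNorm (S α) ≤ C₀ * C ^ (∑ i, α i)) :
    ∀ α : Fin n →₀ ℕ,
      specNorm (S α) ≤ specNorm (S 0) * C ^ (∑ i, α i) ∧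
      specNorm (S 0) * C ^ (∑ i, α i) ≤ (S 0).trace * C ^ (∑ i, α i) := by
  have hf : ∀ γ : Fin n →₀ ℕ, (0:ℝ) ≤ specNorm (S γ) := fun _ => MomScal.specNorm_nonneg _
  have hS0 : (S 0).PosSemidef := by simpa using MomScal.even_psd S hPSD 0
  have key := MomScal.key_ineq S hsym hPSD
  have hsum2 : ∀ γ : Fin n →₀ ℕ, (∑ i, (γ + γ) i) = 2 * ∑ i, γ i := by
    intro γ
    simp [Finsupp.add_apply, Finset.sum_add_distrib, two_mul]
  have iter : ∀ (k : ℕ) (γ : Fin n →₀ ℕ),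
      specNorm (S γ) ^ (2 ^ k) ≤ specNorm (S 0) ^ (2 ^ k - 1) * (C₀ * C ^ (2 ^ k * (∑ i, γ i))) := by
    intro k
    induction k with
    | zero => intro γ; simpa using hbd γ
    | succ k ih =>
      intro γ
      have h2k : 1 ≤ 2 ^ k := Nat.one_le_two_pow
      calc specNorm (S γ) ^ (2 ^ (k + 1)) = (specNorm (S γ) ^ 2) ^ (2 ^ k) := by
            rw [← pow_mul]; congr 1; rw [pow_succ]; ring
        _ ≤ (specNorm (S 0) * specNorm (S (γ + γ))) ^ (2 ^ k) :=
            pow_le_pow_left₀ (sq_nonneg _) (key γ) _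
        _ = specNorm (S 0) ^ (2 ^ k) * specNorm (S (γ + γ)) ^ (2 ^ k) := mul_pow _ _ _
        _ ≤ specNorm (S 0) ^ (2 ^ k) *
              (specNorm (S 0) ^ (2 ^ k - 1) * (C₀ * C ^ (2 ^ k * (∑ i, (γ + γ) i)))) :=
            mul_le_mul_of_nonneg_left (ih (γ + γ)) (pow_nonneg (MomScal.specNorm_nonneg _) _)
        _ = specNorm (S 0) ^ (2 ^ (k + 1) - 1) * (C₀ * C ^ (2 ^ (k + 1) * (∑ i, γ i))) := by
            rw [hsum2 γ, ← mul_assoc, ← pow_add,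
              show 2 ^ k + (2 ^ k - 1) = 2 ^ (k + 1) - 1 by omega,
              show 2 ^ k * (2 * (∑ i, γ i)) = 2 ^ (k + 1) * (∑ i, γ i) by ring]
  intro α
  constructor
  · by_cases h0 : specNorm (S 0) = 0
    · have h := iter 1 α
      rw [h0] at h
      simp only [pow_succ, pow_zero, one_mul] at h
      have : specNorm (S α) = 0 := by nlinarith [hf α, sq_nonneg (specNorm (S α))]
      rw [this, h0, zero_mul]
    · have hf0 : 0 < specNorm (S 0) := lt_of_le_of_ne (hf 0) (Ne.symm h0)
      by_contra hcon
      push_neg at hcon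
      have hden : 0 < specNorm (S 0) * C ^ (∑ i, α i) := by positivity
      set t := specNorm (S α) / (specNorm (S 0) * C ^ (∑ i, α i)) with ht
      have ht1 : 1 < t := (one_lt_div hden).2 hcon
      obtain ⟨k, hk⟩ := pow_unbounded_of_one_lt (C₀ / specNorm (S 0)) ht1
      have h2k : 1 ≤ 2 ^ k := Nat.one_le_two_pow
      have h2 : t ^ (2 ^ k) ≤ C₀ / specNorm (S 0) := by
        rw [ht, div_pow, div_le_div_iff₀ (by positivity) hf0]
        calc specNorm (S α) ^ (2 ^ k) * specNorm (S 0)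
            ≤ (specNorm (S 0) ^ (2 ^ k - 1) * (C₀ * C ^ (2 ^ k * (∑ i, α i)))) * specNorm (S 0) :=
              mul_le_mul_of_nonneg_right (iter k α) hf0.le
          _ = C₀ * (specNorm (S 0) * C ^ (∑ i, α i)) ^ (2 ^ k) := by
              rw [mul_pow, ← pow_mul,
                show (∑ i, α i) * 2 ^ k = 2 ^ k * (∑ i, α i) by ring]
              rw [show (specNorm (S 0) ^ (2 ^ k - 1) * (C₀ * C ^ (2 ^ k * (∑ i, α i)))) *
                    specNorm (S 0)
                  = (specNorm (S 0) ^ (2 ^ k - 1) * specNorm (S 0)) *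
                    (C₀ * C ^ (2 ^ k * (∑ i, α i))) by ring]
              rw [← pow_succ, show 2 ^ k - 1 + 1 = 2 ^ k by omega]
              ring
      have h3 : t ^ k ≤ t ^ (2 ^ k) :=
        pow_le_pow_right₀ ht1.le (Nat.lt_two_pow_self (n := k)).le
      linarith
  · apply mul_le_mul_of_nonneg_right _ (by positivity)
    exact MomScal.trace_bound hS0 (hsym 0)
end

section
/- Let L : ℝ[x]_{2d} → ℝ be a linear functional on polynomials of degree at most 2d in n variables such that L(f²) ≥ 0 for all f ∈ ℝ[x]_d, L(1) ≤ 1, and L(x_i^{2d}) ≤ 1 for all i ∈ [n]. Let S = (S_α)_{α ∈ ℕⁿ_{2d}} be a sequence of p×p symmetric matrices with tr(S_α) = L(x^α) and with PSD moment matrix M_d(S). Then ‖S_α‖ ≤ 1 (spectral norm) for all α with |α| ≤ 2d. -/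
open MeasureTheory MvPolynomial Matrix Finset

section AuxProofs
open MvPolynomial Finset Matrix
variable {n d p : ℕ}


private lemma sum2' {M : Type*} [AddCommMonoid M] (i j : Fin n) (hij : i ≠ j) (f : Fin n → M) :
    ∑ k, f k = f i + f j + ∑ k ∈ (Finset.univ.erase i).erase j, f k := by
  rw [← Finset.add_sum_erase Finset.univ f (Finset.mem_univ i),
    ← Finset.add_sum_erase _ f (Finset.mem_erase.mpr ⟨hij.symm, Finset.mem_univ j⟩), add_assoc]

private lemma sum1' {M : Type*} [AddCommMonoid M] (i : Fin n) (f : Fin n → M) :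
    ∑ k, f k = f i + ∑ k ∈ Finset.univ.erase i, f k :=
  (Finset.add_sum_erase Finset.univ f (Finset.mem_univ i)).symm

private lemma deg_monomial' (δ : Fin n →₀ ℕ) : (monomial δ (1:ℝ)).totalDegree = ∑ i, δ i := by
  rw [MvPolynomial.totalDegree_monomial _ (one_ne_zero)]
  exact Finsupp.sum_fintype _ _ (fun _ => rfl)

private lemma sq_monomial' (δ : Fin n →₀ ℕ) : (monomial δ (1:ℝ))^2 = monomial (δ + δ) 1 := by
  rw [pow_two, monomial_mul, one_mul]

private lemma L_CS' (L : MvPolynomial (Fin n) ℝ →ₗ[ℝ] ℝ)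
    (hL2 : ∀ f : MvPolynomial (Fin n) ℝ, f.totalDegree ≤ d → 0 ≤ L (f ^ 2))
    (f g : MvPolynomial (Fin n) ℝ) (hf : f.totalDegree ≤ d) (hg : g.totalDegree ≤ d) :
    (L (f * g))^2 ≤ L (f^2) * L (g^2) := by
  have key : ∀ t : ℝ, 0 ≤ L (f^2) * (t * t) + (2 * L (f * g)) * t + L (g^2) := by
    intro t
    have h1 : (t • f + g)^2 = (t*t) • f^2 + (2*t) • (f*g) + g^2 := by
      simp only [smul_eq_C_mul, C_mul, C_pow, map_ofNat]; ring
    have h2 := hL2 (t • f + g) ?_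
    · rw [h1] at h2
      simp only [map_add, _root_.map_smul, smul_eq_mul] at h2
      linarith
    · refine le_trans (MvPolynomial.totalDegree_add _ _) ?_
      simp only [max_le_iff]
      exact ⟨le_trans (totalDegree_smul_le _ _) hf, hg⟩
  have := discrim_le_zero key
  rw [discrim] at this
  nlinarith

private lemma L_even' (L : MvPolynomial (Fin n) ℝ →ₗ[ℝ] ℝ)
    (hL2 : ∀ f : MvPolynomial (Fin n) ℝ, f.totalDegree ≤ d → 0 ≤ L (f ^ 2))
    (hL1 : L 1 ≤ 1) (hLX : ∀ i : Fin n, L (X i ^ (2 * d)) ≤ 1) :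
    ∀ γ : Fin n →₀ ℕ, (∑ i, γ i) ≤ d → L (monomial (γ + γ) 1) ≤ 1 := by
  have hCS := L_CS' L hL2
  set F : (Fin n →₀ ℕ) → ℝ := fun γ => L (monomial (γ + γ) 1) with hF
  set Φ : (Fin n →₀ ℕ) → ℕ := fun γ => ∑ i, (γ i)^2 with hΦ
  set T : Fin n →₀ ℕ := Finsupp.equivFunOnFinite.symm (fun _ => d) with hT
  set D : Finset (Fin n →₀ ℕ) := (Finset.Iic T).filter (fun γ => ∑ i, γ i ≤ d) with hD
  have memD : ∀ γ : Fin n →₀ ℕ, (∑ i, γ i) ≤ d → γ ∈ D := by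
    intro γ hγ
    refine Finset.mem_filter.mpr ⟨Finset.mem_Iic.mpr ?_, hγ⟩
    refine Finsupp.le_def.mpr fun i => ?_
    have : γ i ≤ ∑ k, γ k := Finset.single_le_sum (fun k _ => Nat.zero_le _) (mem_univ i)
    simpa [hT] using le_trans this hγ
  have memD' : ∀ γ ∈ D, (∑ i, γ i) ≤ d := fun γ hγ => (Finset.mem_filter.mp hγ).2
  have hF0 : ∀ γ ∈ D, 0 ≤ F γ := by
    intro γ hγ
    have := hL2 (monomial γ 1) (by rw [deg_monomial']; exact memD' γ hγ)
    rwa [sq_monomial'] at this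
  obtain ⟨γ₀, hγ₀D, hγ₀max⟩ := D.exists_max_image F ⟨0, memD 0 (by simp)⟩
  set V := F γ₀ with hV
  set T' : Finset (Fin n →₀ ℕ) := D.filter (fun γ => V ≤ F γ) with hT'
  obtain ⟨μ, hμT', hμmax⟩ := T'.exists_max_image Φ ⟨γ₀, Finset.mem_filter.mpr ⟨hγ₀D, le_refl _⟩⟩
  obtain ⟨hμD, hμV⟩ := Finset.mem_filter.mp hμT'
  have hFμ : F μ = V := le_antisymm (hγ₀max μ hμD) hμV
  suffices hgoal : V ≤ 1 by
    intro γ hγ; exact le_trans (hγ₀max γ (memD γ hγ)) hgoal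
  have main : ∀ δ₁ δ₂ : Fin n →₀ ℕ, δ₁ + δ₂ = μ + μ → (∑ k, δ₁ k) ≤ d →
      (∑ k, δ₂ k) ≤ d → 2 * (∑ k, (μ k)^2) < (∑ k, (δ₁ k)^2) + (∑ k, (δ₂ k)^2) → V ≤ 1 := by
    intro δ₁ δ₂ hsum hd1 hd2 hΦlt
    by_contra hV1
    push_neg at hV1
    have hVpos : 0 < V := lt_trans one_pos hV1
    have hcs : (F μ)^2 ≤ F δ₁ * F δ₂ := by
      have := hCS (monomial δ₁ 1) (monomial δ₂ 1)
        (by rw [deg_monomial']; exact hd1) (by rw [deg_monomial']; exact hd2)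
      rwa [monomial_mul, one_mul, hsum, sq_monomial', sq_monomial'] at this
    have h1D := memD δ₁ hd1
    have h2D := memD δ₂ hd2
    have h1le : F δ₁ ≤ V := hγ₀max δ₁ h1D
    have h2le : F δ₂ ≤ V := hγ₀max δ₂ h2D
    have h10 := hF0 δ₁ h1D
    have h20 := hF0 δ₂ h2D
    rw [hFμ] at hcs
    have h1V : V ≤ F δ₁ := by nlinarith
    have h2V : V ≤ F δ₂ := by nlinarith
    have m1 : Φ δ₁ ≤ Φ μ := hμmax δ₁ (Finset.mem_filter.mpr ⟨h1D, h1V⟩)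
    have m2 : Φ δ₂ ≤ Φ μ := hμmax δ₂ (Finset.mem_filter.mpr ⟨h2D, h2V⟩)
    simp only [hΦ] at m1 m2
    omega
  have hμd : ∑ k, μ k ≤ d := memD' μ hμD
  by_cases hμ0 : μ = 0
  · rw [← hFμ, hF]; subst hμ0; simpa using hL1
  · obtain ⟨i, hi⟩ : ∃ i, μ i ≠ 0 := by
      by_contra hc; push_neg at hc
      exact hμ0 (Finsupp.ext fun i => hc i)
    have hiv : 1 ≤ μ i := Nat.one_le_iff_ne_zero.mpr hi
    by_cases hj : ∃ j, j ≠ i ∧ μ j ≠ 0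
    · -- two nonzero coordinates
      obtain ⟨j, hji, hjne⟩ := hj
      set f₁ : Fin n → ℕ := fun k => if k = i then μ i + 1 else if k = j then μ j - 1 else μ k with hf₁
      set f₂ : Fin n → ℕ := fun k => if k = i then μ i - 1 else if k = j then μ j + 1 else μ k with hf₂
      set δ₁ : Fin n →₀ ℕ := Finsupp.equivFunOnFinite.symm f₁ with hδ₁
      set δ₂ : Fin n →₀ ℕ := Finsupp.equivFunOnFinite.symm f₂ with hδ₂
      have hδ₁app : ∀ k, δ₁ k = f₁ k := fun k => rfl
      have hδ₂app : ∀ k, δ₂ k = f₂ k := fun k => rfl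
      have hij : i ≠ j := fun h => hji h.symm
      have hjv : 1 ≤ μ j := Nat.one_le_iff_ne_zero.mpr hjne
      refine main δ₁ δ₂ ?_ ?_ ?_ ?_ <;> clear main
      · ext k
        simp only [Finsupp.add_apply, hδ₁app, hδ₂app, hf₁, hf₂]
        by_cases hki : k = i
        · subst hki; simp [hij]; omega
        · by_cases hkj : k = j
          · subst hkj; simp [hji]; omega
          · simp [hki, hkj]
      · have h1 : ∑ k, δ₁ k = ∑ k, μ k := by
          rw [sum2' i j hij (fun k => δ₁ k), sum2' i j hij (fun k => μ k)]
          have : ∑ k ∈ (Finset.univ.erase i).erase j, δ₁ k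
              = ∑ k ∈ (Finset.univ.erase i).erase j, μ k := by
            refine Finset.sum_congr rfl fun k hk => ?_
            obtain ⟨hkj, hki⟩ := Finset.mem_erase.mp hk
            have hki' : k ≠ i := (Finset.mem_erase.mp hki).1
            simp [hδ₁app, hf₁, hki', hkj]
          rw [this]
          have e1 : δ₁ i = μ i + 1 := by simp [hδ₁app, hf₁]
          have e2 : δ₁ j = μ j - 1 := by simp [hδ₁app, hf₁, hji]
          omega
        omega
      · have h1 : ∑ k, δ₂ k = ∑ k, μ k := by
          rw [sum2' i j hij (fun k => δ₂ k), sum2' i j hij (fun k => μ k)]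
          have : ∑ k ∈ (Finset.univ.erase i).erase j, δ₂ k
              = ∑ k ∈ (Finset.univ.erase i).erase j, μ k := by
            refine Finset.sum_congr rfl fun k hk => ?_
            obtain ⟨hkj, hki⟩ := Finset.mem_erase.mp hk
            have hki' : k ≠ i := (Finset.mem_erase.mp hki).1
            simp [hδ₂app, hf₂, hki', hkj]
          rw [this]
          have e1 : δ₂ i = μ i - 1 := by simp [hδ₂app, hf₂]
          have e2 : δ₂ j = μ j + 1 := by simp [hδ₂app, hf₂, hji]
          omega
        omega
      · rw [sum2' i j hij (fun k => (δ₁ k)^2), sum2' i j hij (fun k => (δ₂ k)^2),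
          sum2' i j hij (fun k => (μ k)^2)]
        have r1 : ∑ k ∈ (Finset.univ.erase i).erase j, (δ₁ k)^2
            = ∑ k ∈ (Finset.univ.erase i).erase j, (μ k)^2 := by
          refine Finset.sum_congr rfl fun k hk => ?_
          obtain ⟨hkj, hki⟩ := Finset.mem_erase.mp hk
          have hki' : k ≠ i := (Finset.mem_erase.mp hki).1
          simp [hδ₁app, hf₁, hki', hkj]
        have r2 : ∑ k ∈ (Finset.univ.erase i).erase j, (δ₂ k)^2
            = ∑ k ∈ (Finset.univ.erase i).erase j, (μ k)^2 := by
          refine Finset.sum_congr rfl fun k hk => ?_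
          obtain ⟨hkj, hki⟩ := Finset.mem_erase.mp hk
          have hki' : k ≠ i := (Finset.mem_erase.mp hki).1
          simp [hδ₂app, hf₂, hki', hkj]
        rw [r1, r2]
        have e1 : δ₁ i = μ i + 1 := by simp [hδ₁app, hf₁]
        have e2 : δ₁ j = μ j - 1 := by simp [hδ₁app, hf₁, hji]
        have e3 : δ₂ i = μ i - 1 := by simp [hδ₂app, hf₂]
        have e4 : δ₂ j = μ j + 1 := by simp [hδ₂app, hf₂, hji]
        rw [e1, e2, e3, e4]
        obtain ⟨a, ha⟩ : ∃ a, μ i = a + 1 := ⟨μ i - 1, by omega⟩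
        obtain ⟨b, hb⟩ : ∃ b, μ j = b + 1 := ⟨μ j - 1, by omega⟩
        rw [ha, hb]
        have key : (a + 1 + 1)^2 + (b + 1 - 1)^2 + ((a + 1 - 1)^2 + (b + 1 + 1)^2)
            = 2 * ((a+1)^2) + 2 * ((b+1)^2) + 4 := by
          simp [Nat.add_sub_cancel]; ring
        set R := ∑ k ∈ (Finset.univ.erase i).erase j, (μ k)^2
        linarith [key]
    · -- single nonzero coordinate
      push_neg at hj
      have hall : ∀ k, k ≠ i → μ k = 0 := fun k hk => hj k hk
      have hsumμ : ∑ k, μ k = μ i := by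
        rw [sum1' i (fun k => μ k)]
        have : ∑ k ∈ Finset.univ.erase i, μ k = 0 :=
          Finset.sum_eq_zero fun k hk => hall k (Finset.mem_erase.mp hk).1
        omega
      by_cases hk : μ i = d
      · have hmono : μ + μ = Finsupp.single i (2 * d) := by
          ext k
          by_cases hki : k = i
          · subst hki; simp [Finsupp.add_apply, hk]; omega
          · have hik : i ≠ k := fun h => hki h.symm
            simp [Finsupp.add_apply, hall k hki, Finsupp.single_apply, hik]
        rw [← hFμ, hF]
        simp only
        rw [hmono, ← X_pow_eq_monomial]
        exact hLX i
      · set f₁ : Fin n → ℕ := fun k => if k = i then μ i + 1 else 0 with hf₁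
        set f₂ : Fin n → ℕ := fun k => if k = i then μ i - 1 else 0 with hf₂
        set δ₁ : Fin n →₀ ℕ := Finsupp.equivFunOnFinite.symm f₁ with hδ₁
        set δ₂ : Fin n →₀ ℕ := Finsupp.equivFunOnFinite.symm f₂ with hδ₂
        have hδ₁app : ∀ k, δ₁ k = f₁ k := fun k => rfl
        have hδ₂app : ∀ k, δ₂ k = f₂ k := fun k => rfl
        have hid : μ i < d := by omega
        refine main δ₁ δ₂ ?_ ?_ ?_ ?_
        · ext k
          simp only [Finsupp.add_apply, hδ₁app, hδ₂app, hf₁, hf₂]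
          by_cases hki : k = i
          · subst hki; simp; omega
          · simp [hki, hall k hki]
        · rw [sum1' i (fun k => δ₁ k)]
          have : ∑ k ∈ Finset.univ.erase i, δ₁ k = 0 :=
            Finset.sum_eq_zero fun k hk => by simp [hδ₁app, hf₁, (Finset.mem_erase.mp hk).1]
          have e1 : δ₁ i = μ i + 1 := by simp [hδ₁app, hf₁]
          omega
        · rw [sum1' i (fun k => δ₂ k)]
          have : ∑ k ∈ Finset.univ.erase i, δ₂ k = 0 :=
            Finset.sum_eq_zero fun k hk => by simp [hδ₂app, hf₂, (Finset.mem_erase.mp hk).1]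
          have e1 : δ₂ i = μ i - 1 := by simp [hδ₂app, hf₂]
          omega
        · rw [sum1' i (fun k => (δ₁ k)^2), sum1' i (fun k => (δ₂ k)^2), sum1' i (fun k => (μ k)^2)]
          have r0 : ∑ k ∈ Finset.univ.erase i, (μ k)^2 = 0 :=
            Finset.sum_eq_zero fun k hk => by simp [hall k (Finset.mem_erase.mp hk).1]
          have r1 : ∑ k ∈ Finset.univ.erase i, (δ₁ k)^2 = 0 :=
            Finset.sum_eq_zero fun k hk => by simp [hδ₁app, hf₁, (Finset.mem_erase.mp hk).1]
          have r2 : ∑ k ∈ Finset.univ.erase i, (δ₂ k)^2 = 0 :=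
            Finset.sum_eq_zero fun k hk => by simp [hδ₂app, hf₂, (Finset.mem_erase.mp hk).1]
          rw [r0, r1, r2]
          have e1 : δ₁ i = μ i + 1 := by simp [hδ₁app, hf₁]
          have e2 : δ₂ i = μ i - 1 := by simp [hδ₂app, hf₂]
          rw [e1, e2]
          obtain ⟨a, ha⟩ : ∃ a, μ i = a + 1 := ⟨μ i - 1, by omega⟩
          rw [ha]
          have key : (a + 1 + 1)^2 + (a + 1 - 1)^2 = 2 * ((a+1)^2) + 2 := by
            simp [Nat.add_sub_cancel]; ring
          linarith [key]

private lemma sum_single_one' (i : Fin n) : ∑ k, (Finsupp.single i 1) k = 1 := by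
  rw [Finset.sum_eq_single i (fun k _ hk => Finsupp.single_eq_of_ne' (fun h => hk h.symm))
    (fun h => absurd (Finset.mem_univ i) h)]
  simp

private lemma split' (d : ℕ) : ∀ k (α : Fin n →₀ ℕ), (∑ i, α i) ≤ d + k →
    ∃ β γ : Fin n →₀ ℕ, α = β + γ ∧ (∑ i, β i) ≤ d ∧ (∑ i, γ i) ≤ k := by
  intro k
  induction k with
  | zero => exact fun α hα => ⟨α, 0, by simp, by simpa using hα, by simp⟩
  | succ k ih =>
    intro α hα
    by_cases h : (∑ i, α i) ≤ d + k
    · obtain ⟨β, γ, h1, h2, h3⟩ := ih α h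
      exact ⟨β, γ, h1, h2, le_trans h3 (Nat.le_succ k)⟩
    · push_neg at h
      obtain ⟨i, hi⟩ : ∃ i, α i ≠ 0 := by
        by_contra hc; push_neg at hc
        simp [Finset.sum_eq_zero fun i _ => hc i] at h
      have hle : Finsupp.single i 1 ≤ α := Finsupp.single_le_iff.mpr (Nat.one_le_iff_ne_zero.mpr hi)
      set α' := α - Finsupp.single i 1 with hα'
      have hcancel : α' + Finsupp.single i 1 = α := tsub_add_cancel_of_le hle
      have hsum : ∑ j, α' j + 1 = ∑ j, α j := by
        conv_rhs => rw [← hcancel]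
        simp [Finsupp.add_apply, Finset.sum_add_distrib, sum_single_one']
      obtain ⟨β, γ, h1, h2, h3⟩ := ih α' (by omega)
      refine ⟨β, γ + Finsupp.single i 1, ?_, h2, ?_⟩
      · rw [← hcancel, h1, add_assoc]
      · have : ∑ j : Fin n, ((γ + Finsupp.single i 1 : Fin n →₀ ℕ)) j = (∑ j : Fin n, γ j) + 1 := by
          simp [Finsupp.add_apply, Finset.sum_add_distrib, sum_single_one']
        omega

private lemma quad_eq_dot {ι : Type*} [Fintype ι] (A : Matrix ι ι ℝ) (x y : ι → ℝ) :
    x ⬝ᵥ A *ᵥ y = ∑ i, ∑ j, x i * A i j * y j := by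
  simp [dotProduct, Matrix.mulVec, Finset.mul_sum, mul_assoc]

private lemma quad_le_trace (A : Matrix (Fin p) (Fin p) ℝ) (hA : A.PosSemidef)
    (x : Fin p → ℝ) : ∑ i, ∑ j, x i * A i j * x j ≤ A.trace * ∑ i, (x i)^2 := by
  obtain ⟨B, rfl⟩ : ∃ B : Matrix (Fin p) (Fin p) ℝ, A = Bᴴ * B := by
    open scoped MatrixOrder in
    exact ⟨CFC.sqrt A, by rw [(Matrix.nonneg_iff_posSemidef.mp (CFC.sqrt_nonneg A)).1.eq,
      CFC.sqrt_mul_sqrt_self A (Matrix.nonneg_iff_posSemidef.mpr hA)]⟩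
  have lhs : ∑ i, ∑ j, x i * (Bᴴ * B) i j * x j = ∑ k, (∑ i, B k i * x i)^2 := by
    have step1 : ∀ i j : Fin p, x i * (Bᴴ * B) i j * x j
        = ∑ k, (B k i * x i) * (B k j * x j) := by
      intro i j
      simp only [Matrix.mul_apply, Matrix.conjTranspose_apply, star_trivial, Finset.sum_mul,
        Finset.mul_sum]
      exact Finset.sum_congr rfl fun k _ => by ring
    simp only [step1]
    rw [show ∑ i : Fin p, ∑ j : Fin p, ∑ k : Fin p, (B k i * x i) * (B k j * x j)
        = ∑ i : Fin p, ∑ k : Fin p, ∑ j : Fin p, (B k i * x i) * (B k j * x j) from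
        Finset.sum_congr rfl fun i _ => Finset.sum_comm]
    rw [Finset.sum_comm]
    refine Finset.sum_congr rfl fun k _ => ?_
    rw [pow_two, Finset.sum_mul_sum]
  have tr : (Bᴴ * B).trace = ∑ k, ∑ i, (B k i)^2 := by
    simp only [Matrix.trace, Matrix.diag, Matrix.mul_apply, Matrix.conjTranspose_apply,
      star_trivial, pow_two]
    rw [Finset.sum_comm]
  rw [lhs, tr, Finset.sum_mul]
  exact Finset.sum_le_sum fun k _ => Finset.sum_mul_sq_le_sq_mul_sq _ _ _

private lemma specNorm_le_one' (A : Matrix (Fin p) (Fin p) ℝ)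
    (h : ∀ x y : Fin p → ℝ,
      (∑ i, ∑ j, x i * A i j * y j)^2 ≤ (∑ i, (x i)^2) * (∑ j, (y j)^2)) :
    specNorm A ≤ 1 := by
  refine ContinuousLinearMap.opNorm_le_bound _ zero_le_one fun v => ?_
  rw [LinearMap.coe_toContinuousLinearMap', Matrix.toEuclideanLin_apply]
  set w : Fin p → ℝ := WithLp.equiv 2 (Fin p → ℝ) v with hw
  set u : Fin p → ℝ := A *ᵥ w with hu
  have hud : ∑ i, (u i)^2 = ∑ i, ∑ j, u i * A i j * w j := by
    refine Finset.sum_congr rfl fun i _ => ?_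
    rw [pow_two, hu]
    simp [Matrix.mulVec, dotProduct, Finset.mul_sum, mul_assoc]
  have key := h u w
  rw [← hud] at key
  have hu0 : 0 ≤ ∑ i, (u i)^2 := Finset.sum_nonneg fun i _ => sq_nonneg _
  have hw0 : 0 ≤ ∑ i, (w i)^2 := Finset.sum_nonneg fun i _ => sq_nonneg _
  have hle : ∑ i, (u i)^2 ≤ ∑ i, (w i)^2 := by nlinarith
  rw [one_mul]
  rw [EuclideanSpace.norm_eq, EuclideanSpace.norm_eq]
  refine Real.sqrt_le_sqrt ?_
  have hle' : ∑ x, (A *ᵥ v.ofLp) x ^ 2 ≤ ∑ x, v.ofLp x ^ 2 := hle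
  simpa [sq_abs] using hle'

private def toExpo (β : Fin n →₀ ℕ) (h : (∑ i, β i) ≤ d) : Expo n d :=
  ⟨fun i => ⟨β i, by
    have : β i ≤ ∑ k, β k := Finset.single_le_sum (fun k _ => Nat.zero_le _) (Finset.mem_univ i)
    omega⟩, h⟩

private lemma expF_toExpo (β : Fin n →₀ ℕ) (h : (∑ i, β i) ≤ d) :
    expF (toExpo β h).1 = β := by
  ext i
  simp [expF, toExpo]

private lemma sum_add_finsupp (σ τ : Fin n →₀ ℕ) :
    ∑ i : Fin n, ((σ + τ : Fin n →₀ ℕ)) i = (∑ i, σ i) + ∑ i, τ i := by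
  simp [Finsupp.add_apply, Finset.sum_add_distrib]

end AuxProofs

/-- boundedness of matrix moments from the Lasserre–Netzer scalar bounds. -/
theorem moment_bound_from_functional {n p d : ℕ}
    (L : MvPolynomial (Fin n) ℝ →ₗ[ℝ] ℝ)
    (hL2 : ∀ f : MvPolynomial (Fin n) ℝ, f.totalDegree ≤ d → 0 ≤ L (f ^ 2))
    (hL1 : L 1 ≤ 1) (hLX : ∀ i : Fin n, L (X i ^ (2 * d)) ≤ 1)
    (S : (Fin n →₀ ℕ) → Matrix (Fin p) (Fin p) ℝ) (hsym : ∀ α, (S α).IsSymm)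
    (htr : ∀ α : Fin n →₀ ℕ, (∑ i, α i) ≤ 2 * d →
      (S α).trace = L (MvPolynomial.monomial α 1))
    (hPSD : (momentMat S d).PosSemidef) :
    ∀ α : Fin n →₀ ℕ, (∑ i, α i) ≤ 2 * d → specNorm (S α) ≤ 1 := by
  intro α hα
  have hEven := L_even' L hL2 hL1 hLX
  obtain ⟨β, γ, rfl, hβ, hγ⟩ := split' d d α (by omega)
  have hβ2 : (∑ i, ((β + β : Fin n →₀ ℕ)) i) ≤ 2 * d := by rw [sum_add_finsupp]; omega
  have hγ2 : (∑ i, ((γ + γ : Fin n →₀ ℕ)) i) ≤ 2 * d := by rw [sum_add_finsupp]; omega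
  have htrA : (S (β + β)).trace ≤ 1 := by rw [htr _ hβ2]; exact hEven β hβ
  have htrC : (S (γ + γ)).trace ≤ 1 := by rw [htr _ hγ2]; exact hEven γ hγ
  have hApsd : (S (β + β)).PosSemidef := by
    have h1 := hPSD.submatrix (fun i : Fin p => ((toExpo β hβ : Expo n d), i))
    have h2 : (momentMat S d).submatrix (fun i : Fin p => ((toExpo β hβ : Expo n d), i))
        (fun i : Fin p => ((toExpo β hβ : Expo n d), i)) = S (β + β) := by
      ext i j
      simp [momentMat, Matrix.submatrix_apply, expF_toExpo]
    rwa [h2] at h1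
  have hCpsd : (S (γ + γ)).PosSemidef := by
    have h1 := hPSD.submatrix (fun i : Fin p => ((toExpo γ hγ : Expo n d), i))
    have h2 : (momentMat S d).submatrix (fun i : Fin p => ((toExpo γ hγ : Expo n d), i))
        (fun i : Fin p => ((toExpo γ hγ : Expo n d), i)) = S (γ + γ) := by
      ext i j
      simp [momentMat, Matrix.submatrix_apply, expF_toExpo]
    rwa [h2] at h1
  refine specNorm_le_one' _ fun x y => ?_
  set QA := ∑ i, ∑ i', x i * S (β + β) i i' * x i' with hQA
  set QC := ∑ j, ∑ j', y j * S (γ + γ) j j' * y j' with hQC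
  set c := ∑ i, ∑ j, x i * S (β + γ) i j * y j with hc
  have hx0 : 0 ≤ ∑ i, (x i)^2 := Finset.sum_nonneg fun i _ => sq_nonneg _
  have hy0 : 0 ≤ ∑ j, (y j)^2 := Finset.sum_nonneg fun j _ => sq_nonneg _
  have hQA1 : QA ≤ ∑ i, (x i)^2 := by
    refine le_trans (quad_le_trace _ hApsd x) ?_
    nlinarith
  have hQC1 : QC ≤ ∑ j, (y j)^2 := by
    refine le_trans (quad_le_trace _ hCpsd y) ?_
    nlinarith
  have hQA0 : 0 ≤ QA := by
    have := hApsd.dotProduct_mulVec_nonneg x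
    rwa [star_trivial, quad_eq_dot] at this
  have hQC0 : 0 ≤ QC := by
    have := hCpsd.dotProduct_mulVec_nonneg y
    rwa [star_trivial, quad_eq_dot] at this
  -- combined 2x2 block quadratic form
  set e : Fin p ⊕ Fin p → Expo n d × Fin p :=
    Sum.elim (fun i => ((toExpo β hβ : Expo n d), i)) (fun j => ((toExpo γ hγ : Expo n d), j))
    with he
  have hMsub := hPSD.submatrix e
  set M' := (momentMat S d).submatrix e e with hM'
  have entry_ll : ∀ i i', M' (Sum.inl i) (Sum.inl i') = S (β + β) i i' := by
    intro i i'; simp [hM', he, momentMat, Matrix.submatrix_apply, expF_toExpo]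
  have entry_lr : ∀ i j, M' (Sum.inl i) (Sum.inr j) = S (β + γ) i j := by
    intro i j; simp [hM', he, momentMat, Matrix.submatrix_apply, expF_toExpo]
  have entry_rl : ∀ j i, M' (Sum.inr j) (Sum.inl i) = S (β + γ) i j := by
    intro j i
    have h1 : M' (Sum.inr j) (Sum.inl i) = S (γ + β) j i := by
      simp [hM', he, momentMat, Matrix.submatrix_apply, expF_toExpo]
    rw [h1, add_comm γ β]
    exact (hsym (β + γ)).apply i j
  have entry_rr : ∀ j j', M' (Sum.inr j) (Sum.inr j') = S (γ + γ) j j' := by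
    intro j j'; simp [hM', he, momentMat, Matrix.submatrix_apply, expF_toExpo]
  have key : ∀ s : ℝ, 0 ≤ QA * (s * s) + (-(2 * c)) * s + QC := by
    intro s
    set z : Fin p ⊕ Fin p → ℝ := Sum.elim (fun i => s * x i) (fun j => -(y j)) with hz
    have h0 := hMsub.dotProduct_mulVec_nonneg z
    rw [star_trivial, quad_eq_dot] at h0
    have expand : ∑ a : Fin p ⊕ Fin p, ∑ b : Fin p ⊕ Fin p, z a * M' a b * z b
        = QA * (s * s) + (-(2 * c)) * s + QC := by
      rw [Fintype.sum_sum_type]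
      have inner1 : ∀ i : Fin p, ∑ b : Fin p ⊕ Fin p, z (Sum.inl i) * M' (Sum.inl i) b * z b
          = (∑ i', z (Sum.inl i) * M' (Sum.inl i) (Sum.inl i') * z (Sum.inl i'))
            + ∑ j, z (Sum.inl i) * M' (Sum.inl i) (Sum.inr j) * z (Sum.inr j) :=
        fun i => Fintype.sum_sum_type _
      have inner2 : ∀ j : Fin p, ∑ b : Fin p ⊕ Fin p, z (Sum.inr j) * M' (Sum.inr j) b * z b
          = (∑ i, z (Sum.inr j) * M' (Sum.inr j) (Sum.inl i) * z (Sum.inl i))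
            + ∑ j', z (Sum.inr j) * M' (Sum.inr j) (Sum.inr j') * z (Sum.inr j') :=
        fun j => Fintype.sum_sum_type _
      simp only [inner1, inner2, Finset.sum_add_distrib]
      have T1 : ∑ i, ∑ i', z (Sum.inl i) * M' (Sum.inl i) (Sum.inl i') * z (Sum.inl i')
          = QA * (s * s) := by
        rw [hQA, Finset.sum_mul]
        refine Finset.sum_congr rfl fun i _ => ?_
        rw [Finset.sum_mul]
        refine Finset.sum_congr rfl fun i' _ => ?_
        rw [entry_ll]
        simp only [hz, Sum.elim_inl]
        ring
      have T2 : ∑ i, ∑ j, z (Sum.inl i) * M' (Sum.inl i) (Sum.inr j) * z (Sum.inr j)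
          = -(c * s) := by
        have hrhs : -(c * s) = ∑ i, ∑ j, -(x i * S (β + γ) i j * y j * s) := by
          rw [hc, Finset.sum_mul, ← Finset.sum_neg_distrib]
          refine Finset.sum_congr rfl fun i _ => ?_
          rw [Finset.sum_mul, ← Finset.sum_neg_distrib]
        rw [hrhs]
        refine Finset.sum_congr rfl fun i _ => Finset.sum_congr rfl fun j _ => ?_
        rw [entry_lr]
        simp only [hz, Sum.elim_inl, Sum.elim_inr]
        ring
      have T3 : ∑ j, ∑ i, z (Sum.inr j) * M' (Sum.inr j) (Sum.inl i) * z (Sum.inl i)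
          = -(c * s) := by
        rw [Finset.sum_comm]
        have hrhs : -(c * s) = ∑ i, ∑ j, -(x i * S (β + γ) i j * y j * s) := by
          rw [hc, Finset.sum_mul, ← Finset.sum_neg_distrib]
          refine Finset.sum_congr rfl fun i _ => ?_
          rw [Finset.sum_mul, ← Finset.sum_neg_distrib]
        rw [hrhs]
        refine Finset.sum_congr rfl fun i _ => Finset.sum_congr rfl fun j _ => ?_
        rw [entry_rl]
        simp only [hz, Sum.elim_inl, Sum.elim_inr]
        ring
      have T4 : ∑ j, ∑ j', z (Sum.inr j) * M' (Sum.inr j) (Sum.inr j') * z (Sum.inr j')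
          = QC := by
        rw [hQC]
        refine Finset.sum_congr rfl fun j _ => Finset.sum_congr rfl fun j' _ => ?_
        rw [entry_rr]
        simp only [hz, Sum.elim_inr]
        ring
      rw [T1, T2, T3, T4]
      ring
    rw [expand] at h0
    exact h0
  have hd := discrim_le_zero key
  rw [discrim] at hd
  have hcsq : c^2 ≤ QA * QC := by nlinarith
  calc c^2 ≤ QA * QC := hcsq
    _ ≤ (∑ i, (x i)^2) * (∑ j, (y j)^2) := by nlinarith
end

section
/- Let F ∈ S[x]^p and G ∈ S[x,y]^q be polynomial matrices homogeneous in x, let Y ⊂ ℝ^m be compact, and suppose F(x) ≻ 0 for all x in the intersection of the nonnegative orthant ℝⁿ₊ with X := {x : G(x,y) ⪰ 0 ∀ y ∈ Y}, excluding the origin. Then, with D := max(deg F, deg_x G), there exists ε > 0 such that the homogeneous polynomial matrix F_ε(x) := (eᵀx)^{D−deg F} F(x) − ε( (eᵀx)^D I_p + ∫_Y ⟨(eᵀx)^{D−deg_x G} I_{pq}, G(x,y)⟩_p dν(y) ) is positive definite for all x ∈ ℝⁿ₊ ∩ X \ {0}. -/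
open MeasureTheory MvPolynomial Matrix Finset

section Helpers
open MeasureTheory MvPolynomial Matrix Finset
noncomputable section

variable {n m p q : ℕ}

abbrev wX (n m : ℕ) : (Fin n ⊕ Fin m) → ℕ := Sum.elim (fun _ => 1) (fun _ => 0)

lemma xPart_apply (d : (Fin n ⊕ Fin m) →₀ ℕ) (i : Fin n) : xPart d i = d (Sum.inl i) := rfl

lemma weightX_eq (d : (Fin n ⊕ Fin m) →₀ ℕ) :
    (Finsupp.weight (wX n m)) d = ∑ i, d (Sum.inl i) := by
  rw [Finsupp.weight_apply, Finsupp.sum_fintype (h := by intro; simp)]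
  simp [Fintype.sum_sum_type]

lemma isHomogeneousX_iff (f : MvPolynomial (Fin n ⊕ Fin m) ℝ) (k : ℕ) :
    IsHomogeneousX f k ↔ IsWeightedHomogeneous (wX n m) f k := by
  unfold IsHomogeneousX IsWeightedHomogeneous
  simp only [mem_support_iff, weightX_eq]

end
end Helpers
section Helpers2
open MeasureTheory MvPolynomial Matrix Finset
noncomputable section

variable {n m p q : ℕ}

lemma eval_scale {k : ℕ} {f : MvPolynomial (Fin n) ℝ} (hf : f.IsHomogeneous k)
    (c : ℝ) (x : Fin n → ℝ) : eval (c • x) f = c ^ k * eval x f := by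
  rw [eval_eq', eval_eq', Finset.mul_sum]
  refine Finset.sum_congr rfl fun d hd => ?_
  have hk : ∑ i, d i = k := by
    have h2 := hf (mem_support_iff.mp hd)
    rw [← h2, Finsupp.weight_apply, Finsupp.sum_fintype (h := by intro; simp)]
    simp
  have h3 : ∏ i, (c • x) i ^ d i = c ^ k * ∏ i, x i ^ d i := by
    simp only [Pi.smul_apply, smul_eq_mul, mul_pow]
    rw [Finset.prod_mul_distrib, Finset.prod_pow_eq_pow_sum, hk]
  rw [h3]; ring

lemma evalX_scale {k : ℕ} {f : MvPolynomial (Fin n ⊕ Fin m) ℝ} (hf : IsHomogeneousX f k)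
    (c : ℝ) (x : Fin n → ℝ) (y : Fin m → ℝ) :
    eval (Sum.elim (c • x) y) f = c ^ k * eval (Sum.elim x y) f := by
  rw [eval_eq', eval_eq', Finset.mul_sum]
  refine Finset.sum_congr rfl fun d hd => ?_
  have hk : ∑ i, d (Sum.inl i) = k := hf d hd
  have h3 : ∏ i, Sum.elim (c • x) y i ^ d i = c ^ k * ∏ i, Sum.elim x y i ^ d i := by
    rw [Fintype.prod_sum_type, Fintype.prod_sum_type]
    simp only [Sum.elim_inl, Sum.elim_inr, Pi.smul_apply, smul_eq_mul, mul_pow]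
    rw [Finset.prod_mul_distrib, Finset.prod_pow_eq_pow_sum, hk]
    ring
  rw [h3]; ring

lemma integY_scale {k : ℕ} {f : MvPolynomial (Fin n ⊕ Fin m) ℝ} (hf : IsHomogeneousX f k)
    (ν : Measure (Fin m → ℝ)) (c : ℝ) (x : Fin n → ℝ) :
    eval (c • x) (integY ν f) = c ^ k * eval x (integY ν f) := by
  unfold integY
  rw [map_sum, map_sum, Finset.mul_sum]
  refine Finset.sum_congr rfl fun d hd => ?_
  rw [eval_monomial, eval_monomial]
  have hk : ∑ i, xPart d i = k := by
    simpa [xPart_apply] using hf d hd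
  rw [Finsupp.prod_fintype _ _ (fun i => pow_zero _),
      Finsupp.prod_fintype _ _ (fun i => pow_zero _)]
  simp only [Pi.smul_apply, smul_eq_mul, mul_pow]
  rw [Finset.prod_mul_distrib, Finset.prod_pow_eq_pow_sum, hk]
  ring

lemma isHomogeneousX_G_term (G : Matrix (Fin q) (Fin q) (MvPolynomial (Fin n ⊕ Fin m) ℝ))
    (dG k : ℕ) (hG : ∀ i j, IsHomogeneousX (G i j) dG) :
    IsHomogeneousX ((MvPolynomial.rename (Sum.inl : Fin n → Fin n ⊕ Fin m)
      ((∑ i, X i : MvPolynomial (Fin n) ℝ) ^ k)) * ∑ a, G a a) (k + dG) := by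
  rw [isHomogeneousX_iff]
  apply IsWeightedHomogeneous.mul
  · have hr : (MvPolynomial.rename (Sum.inl : Fin n → Fin n ⊕ Fin m))
        ((∑ i, X i : MvPolynomial (Fin n) ℝ) ^ k)
        = (∑ i : Fin n, X (Sum.inl i) : MvPolynomial (Fin n ⊕ Fin m) ℝ) ^ k := by
      simp [map_pow, map_sum]
    rw [hr]
    have h1 : IsWeightedHomogeneous (wX n m)
        (∑ i : Fin n, (X (Sum.inl i) : MvPolynomial (Fin n ⊕ Fin m) ℝ)) 1 :=
      IsWeightedHomogeneous.sum _ _ _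
        (fun i _ => by simpa using isWeightedHomogeneous_X ℝ (wX n m) (Sum.inl i))
    clear hr
    induction k with
    | zero => simpa using isWeightedHomogeneous_one ℝ (wX n m)
    | succ k ih => rw [pow_succ]; exact ih.mul h1
  · exact IsWeightedHomogeneous.sum _ _ _ (fun a _ => (isHomogeneousX_iff _ _).mp (hG a a))

lemma lram_smul_one (r : MvPolynomial (Fin n ⊕ Fin m) ℝ)
    (G : Matrix (Fin q) (Fin q) (MvPolynomial (Fin n ⊕ Fin m) ℝ)) :
    lram (r • (1 : Matrix (Fin p × Fin q) (Fin p × Fin q) (MvPolynomial (Fin n ⊕ Fin m) ℝ))) G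
      = (r * ∑ a, G a a) • (1 : Matrix (Fin p) (Fin p) (MvPolynomial (Fin n ⊕ Fin m) ℝ)) := by
  ext i j
  simp only [lram, Matrix.of_apply, Matrix.smul_apply, Matrix.one_apply, smul_eq_mul,
    Prod.mk.injEq, ite_and, mul_ite, ite_mul, mul_one, mul_zero, zero_mul, one_mul]
  by_cases hij : j = i
  · subst hij; simp [Finset.mul_sum]
  · simp [hij, Ne.symm hij]

lemma map_integY_smul_one (ν : Measure (Fin m → ℝ)) (h : MvPolynomial (Fin n ⊕ Fin m) ℝ) :
    ((h • (1 : Matrix (Fin p) (Fin p) (MvPolynomial (Fin n ⊕ Fin m) ℝ))).map (integY ν))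
      = (integY ν h) • (1 : Matrix (Fin p) (Fin p) (MvPolynomial (Fin n) ℝ)) := by
  ext i j
  simp only [Matrix.map_apply, Matrix.smul_apply, Matrix.one_apply, smul_eq_mul, mul_ite,
    mul_one, mul_zero]
  split_ifs
  · rfl
  · simp [integY]

end
end Helpers2
section Helpers3
open MeasureTheory MvPolynomial Matrix Finset
noncomputable section

variable {n m p q : ℕ}

lemma qf_smul (N : Matrix (Fin p) (Fin p) ℝ) (a : ℝ) (v : Fin p → ℝ) :
    (a • v) ⬝ᵥ N *ᵥ (a • v) = a ^ 2 * (v ⬝ᵥ N *ᵥ v) := by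
  rw [smul_dotProduct, mulVec_smul, dotProduct_smul]
  simp [smul_eq_mul]; ring

lemma continuous_evalSum (y : Fin m → ℝ) (f : MvPolynomial (Fin n ⊕ Fin m) ℝ) :
    Continuous fun x : Fin n → ℝ => eval (Sum.elim x y) f := by
  refine (MvPolynomial.continuous_eval f).comp (continuous_pi fun i => ?_)
  cases i with
  | inl a => exact continuous_apply a
  | inr b => exact continuous_const

lemma isClosed_psd {α : Type*} [TopologicalSpace α] (g : α → Matrix (Fin q) (Fin q) ℝ)
    (hg : ∀ i j, Continuous fun x => g x i j) :
    IsClosed {x | (g x).PosSemidef} := by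
  have hset : {x | (g x).PosSemidef} =
      (⋂ i, ⋂ j, {x | g x j i = g x i j}) ∩ ⋂ v : Fin q → ℝ, {x | 0 ≤ v ⬝ᵥ g x *ᵥ v} := by
    ext x
    simp only [Set.mem_inter_iff, Set.mem_iInter, Set.mem_setOf_eq, Matrix.posSemidef_iff_dotProduct_mulVec,
      Matrix.IsHermitian, star_trivial]
    constructor
    · rintro ⟨h1, h2⟩
      refine ⟨fun i j => ?_, fun v => h2 v⟩
      conv_lhs => rw [← h1]
      rw [Matrix.conjTranspose_apply, star_trivial]
    · rintro ⟨h1, h2⟩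
      refine ⟨Matrix.ext fun i j => ?_, fun v => h2 v⟩
      rw [Matrix.conjTranspose_apply, star_trivial]
      exact h1 i j
  rw [hset]
  refine IsClosed.inter (isClosed_iInter fun i => isClosed_iInter fun j =>
    isClosed_eq (hg j i) (hg i j)) (isClosed_iInter fun v => ?_)
  refine isClosed_le continuous_const ?_
  unfold dotProduct Matrix.mulVec
  exact continuous_finset_sum _ fun i _ => continuous_const.mul
    (continuous_finset_sum _ fun j _ => (hg i j).mul continuous_const)

end
end Helpers3
section Helpers4
open MeasureTheory MvPolynomial Matrix Finset
noncomputable section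

variable {n m p q : ℕ}

lemma K_compact (Y : Set (Fin m → ℝ)) (G : Matrix (Fin q) (Fin q) (MvPolynomial (Fin n ⊕ Fin m) ℝ)) :
    IsCompact {x : Fin n → ℝ | (∀ i, 0 ≤ x i) ∧ (∑ i, x i) = 1 ∧
      ∀ y ∈ Y, (evalMat (Sum.elim x y) G).PosSemidef} := by
  apply Metric.isCompact_of_isClosed_isBounded
  · have h1 : IsClosed {x : Fin n → ℝ | ∀ i, 0 ≤ x i} := by
      have e : {x : Fin n → ℝ | ∀ i, 0 ≤ x i} = ⋂ i, {x | 0 ≤ x i} := by ext; simp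
      rw [e]; exact isClosed_iInter fun i => isClosed_le continuous_const (continuous_apply i)
    have h2 : IsClosed {x : Fin n → ℝ | (∑ i, x i) = 1} :=
      isClosed_eq (continuous_finset_sum _ fun i _ => continuous_apply i) continuous_const
    have h3 : IsClosed {x : Fin n → ℝ | ∀ y ∈ Y, (evalMat (Sum.elim x y) G).PosSemidef} := by
      have e : {x : Fin n → ℝ | ∀ y ∈ Y, (evalMat (Sum.elim x y) G).PosSemidef}
          = ⋂ y ∈ Y, {x | (evalMat (Sum.elim x y) G).PosSemidef} := by ext; simp
      rw [e]
      exact isClosed_biInter fun y _ => isClosed_psd _ (fun i j => by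
        simpa [evalMat] using continuous_evalSum y (G i j))
    exact h1.inter (h2.inter h3)
  · refine (Metric.isBounded_closedBall (x := (0 : Fin n → ℝ)) (r := 1)).subset ?_
    rintro x ⟨hx0, hx1, -⟩
    rw [Metric.mem_closedBall, dist_zero_right]
    rw [pi_norm_le_iff_of_nonneg (by norm_num)]
    intro i
    rw [Real.norm_eq_abs, abs_of_nonneg (hx0 i), ← hx1]
    exact Finset.single_le_sum (fun j _ => hx0 j) (Finset.mem_univ i)

end
end Helpers4
section Helpers5
open MeasureTheory MvPolynomial Matrix Finset
noncomputable section

variable {n m p q : ℕ}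

lemma isHomogeneous_sum_X_pow (k : ℕ) :
    ((∑ i, X i : MvPolynomial (Fin n) ℝ) ^ k).IsHomogeneous k := by
  have h1 : (∑ i, X i : MvPolynomial (Fin n) ℝ).IsHomogeneous 1 :=
    IsHomogeneous.sum _ _ _ (fun i _ => isHomogeneous_X ℝ i)
  induction k with
  | zero => simpa using isHomogeneous_one (σ := Fin n) (R := ℝ)
  | succ k ih => rw [pow_succ]; exact ih.mul h1

lemma S_compact : IsCompact {v : Fin p → ℝ | v ⬝ᵥ v = 1} := by
  apply Metric.isCompact_of_isClosed_isBounded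
  · refine isClosed_eq ?_ continuous_const
    unfold dotProduct
    exact continuous_finset_sum _ fun i _ => (continuous_apply i).mul (continuous_apply i)
  · refine (Metric.isBounded_closedBall (x := (0 : Fin p → ℝ)) (r := 1)).subset ?_
    intro v hv
    rw [Metric.mem_closedBall, dist_zero_right, pi_norm_le_iff_of_nonneg (by norm_num)]
    intro i
    have h1 : v i * v i ≤ 1 := by
      have h2 : v i * v i ≤ ∑ j, v j * v j :=
        Finset.single_le_sum (f := fun j => v j * v j) (fun j _ => mul_self_nonneg _)
          (Finset.mem_univ i)
      calc v i * v i ≤ ∑ j, v j * v j := h2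
        _ = 1 := hv
    rw [Real.norm_eq_abs, abs_le]
    constructor <;> nlinarith

lemma psd_smul {N : Matrix (Fin q) (Fin q) ℝ} (hN : N.PosSemidef) {c : ℝ} (hc : 0 ≤ c) :
    (c • N).PosSemidef := by
  rw [Matrix.posSemidef_iff_dotProduct_mulVec]
  constructor
  · have h := hN.1
    unfold Matrix.IsHermitian at h ⊢
    rw [Matrix.conjTranspose_smul, h, star_trivial]
  · intro v
    rw [Matrix.smul_mulVec, dotProduct_smul]
    exact mul_nonneg hc (hN.dotProduct_mulVec_nonneg v)

end
end Helpers5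
/-- positive definiteness of the perturbed matrix `F_ε`
on `ℝⁿ₊ ∩ X \ {0}` for small `ε > 0`. -/
theorem poshom_perturbation {n m p q : ℕ}
    (Y : Set (Fin m → ℝ)) (hYc : IsCompact Y)
    (ν : Measure (Fin m → ℝ)) (hsupp : hasSupport ν Y) (hmom : momentsFinite ν)
    (F : Matrix (Fin p) (Fin p) (MvPolynomial (Fin n) ℝ)) (hFs : F.IsSymm)
    (G : Matrix (Fin q) (Fin q) (MvPolynomial (Fin n ⊕ Fin m) ℝ)) (hGs : G.IsSymm)
    (dF dG : ℕ) (hF : ∀ i j, (F i j).IsHomogeneous dF)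
    (hG : ∀ i j, IsHomogeneousX (G i j) dG)
    (hpd : ∀ x : Fin n → ℝ, (∀ i, 0 ≤ x i) → x ≠ 0 →
      (∀ y ∈ Y, (evalMat (Sum.elim x y) G).PosSemidef) → (evalMat x F).PosDef) :
    ∃ ε > (0 : ℝ), ∀ x : Fin n → ℝ, (∀ i, 0 ≤ x i) → x ≠ 0 →
      (∀ y ∈ Y, (evalMat (Sum.elim x y) G).PosSemidef) →
      (evalMat x (
        ((∑ i, X i : MvPolynomial (Fin n) ℝ)) ^ (max dF dG - dF) • F -
        ε • (((∑ i, X i : MvPolynomial (Fin n) ℝ)) ^ (max dF dG) •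
              (1 : Matrix (Fin p) (Fin p) (MvPolynomial (Fin n) ℝ)) +
          (lram ((MvPolynomial.rename (Sum.inl : Fin n → Fin n ⊕ Fin m)
                (((∑ i, X i : MvPolynomial (Fin n) ℝ)) ^ (max dF dG - dG))) •
              (1 : Matrix (Fin p × Fin q) (Fin p × Fin q)
                (MvPolynomial (Fin n ⊕ Fin m) ℝ))) G).map (integY ν)))).PosDef := by

  classical
  set D := max dF dG with hD
  set s : MvPolynomial (Fin n) ℝ := ∑ i, X i with hs
  set g : MvPolynomial (Fin n) ℝ := s ^ D +
    integY ν ((MvPolynomial.rename (Sum.inl : Fin n → Fin n ⊕ Fin m) (s ^ (D - dG))) *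
      ∑ a, G a a) with hg
  have hMat : ∀ ε : ℝ,
      (s ^ (D - dF) • F -
        ε • (s ^ D • (1 : Matrix (Fin p) (Fin p) (MvPolynomial (Fin n) ℝ)) +
          (lram ((MvPolynomial.rename (Sum.inl : Fin n → Fin n ⊕ Fin m) (s ^ (D - dG))) •
              (1 : Matrix (Fin p × Fin q) (Fin p × Fin q) (MvPolynomial (Fin n ⊕ Fin m) ℝ))) G).map
            (integY ν)))
      = s ^ (D - dF) • F - ε • (g • (1 : Matrix (Fin p) (Fin p) (MvPolynomial (Fin n) ℝ))) := by
    intro ε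
    rw [lram_smul_one, map_integY_smul_one, hg, add_smul]
  have hEval : ∀ (ε : ℝ) (x : Fin n → ℝ),
      evalMat x (s ^ (D - dF) • F - ε • (g • (1 : Matrix (Fin p) (Fin p) (MvPolynomial (Fin n) ℝ)))) =
        (eval x s) ^ (D - dF) • evalMat x F -
          (ε * eval x g) • (1 : Matrix (Fin p) (Fin p) ℝ) := by
    intro ε x
    ext i j
    simp only [evalMat, Matrix.map_apply, Matrix.sub_apply, Matrix.smul_apply, Matrix.one_apply,
      smul_eq_mul, map_sub, _root_.map_mul, map_pow, smul_eval, map_add, _root_.map_zero, mul_ite, mul_one, mul_zero]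
    split_ifs <;> simp <;> ring
  have hDF : D - dF + dF = D := Nat.sub_add_cancel (le_max_left dF dG)
  have hDG : D - dG + dG = D := Nat.sub_add_cancel (le_max_right dF dG)
  have hgH : ∀ (c : ℝ) (x : Fin n → ℝ), eval (c • x) g = c ^ D * eval x g := by
    intro c x
    rw [hg, map_add, map_add, mul_add]
    congr 1
    · exact eval_scale (isHomogeneous_sum_X_pow D) c x
    · have h1 := integY_scale (isHomogeneousX_G_term G dG (D - dG) hG) ν c x
      rwa [hDG] at h1
  have hFH : ∀ (c : ℝ) (x : Fin n → ℝ) (i j : Fin p),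
      eval (c • x) (F i j) = c ^ dF * eval x (F i j) := fun c x i j => eval_scale (hF i j) c x
  have hsum : ∀ x : Fin n → ℝ, eval x s = ∑ i, x i := by
    intro x; rw [hs]; simp
  set K : Set (Fin n → ℝ) := {x | (∀ i, 0 ≤ x i) ∧ (∑ i, x i) = 1 ∧
      ∀ y ∈ Y, (evalMat (Sum.elim x y) G).PosSemidef} with hK
  have key : ∀ x : Fin n → ℝ, (∀ i, 0 ≤ x i) → x ≠ 0 →
      (∀ y ∈ Y, (evalMat (Sum.elim x y) G).PosSemidef) →
      0 < (∑ i, x i) ∧ ((∑ i, x i)⁻¹ • x) ∈ K := by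
    intro x hx hx0 hxG
    obtain ⟨i0, hi0⟩ : ∃ i, x i ≠ 0 := Function.ne_iff.mp hx0
    have ht : 0 < ∑ i, x i :=
      Finset.sum_pos' (fun i _ => hx i)
        ⟨i0, Finset.mem_univ i0, lt_of_le_of_ne (hx i0) (Ne.symm hi0)⟩
    refine ⟨ht, ?_, ?_, ?_⟩
    · intro i; exact mul_nonneg (inv_nonneg.mpr ht.le) (hx i)
    · simp only [Pi.smul_apply, smul_eq_mul]
      rw [← Finset.mul_sum, inv_mul_cancel₀ ht.ne']
    · intro y hy
      have he : evalMat (Sum.elim ((∑ i, x i)⁻¹ • x) y) G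
          = ((∑ i, x i)⁻¹) ^ dG • evalMat (Sum.elim x y) G := by
        ext i j
        simp only [evalMat, Matrix.map_apply, Matrix.smul_apply, smul_eq_mul]
        exact evalX_scale (hG i j) _ x y
      rw [he]
      exact psd_smul (hxG y hy) (pow_nonneg (inv_nonneg.mpr ht.le) dG)
  by_cases hp0 : p = 0
  · subst hp0
    refine ⟨1, one_pos, fun x hx hx0 hxG => ?_⟩
    constructor
    · apply Matrix.ext; intro i; exact i.elim0
    · intro v hv
      exact (hv (Finsupp.ext fun i => Fin.elim0 i)).elim
  by_cases hKne : K.Nonempty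
  swap
  · exact ⟨1, one_pos, fun x hx hx0 hxG => absurd ⟨_, (key x hx hx0 hxG).2⟩ hKne⟩
  have hKcpt : IsCompact K := K_compact Y G
  set S : Set (Fin p → ℝ) := {v | v ⬝ᵥ v = 1} with hSdef
  have hScpt : IsCompact S := S_compact
  have hSne : S.Nonempty := by
    refine ⟨Pi.single ⟨0, Nat.pos_of_ne_zero hp0⟩ 1, ?_⟩
    show dotProduct _ _ = 1
    simp [dotProduct, Pi.single_apply]
  set φ : (Fin n → ℝ) × (Fin p → ℝ) → ℝ := fun z => z.2 ⬝ᵥ (evalMat z.1 F *ᵥ z.2) with hφ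
  have hφc : Continuous φ := by
    rw [hφ]
    simp only [dotProduct, Matrix.mulVec, evalMat, Matrix.map_apply]
    exact continuous_finset_sum _ fun i _ =>
      ((continuous_apply i).comp continuous_snd).mul
        (continuous_finset_sum _ fun j _ =>
          (((MvPolynomial.continuous_eval (F i j)).comp continuous_fst).mul
            ((continuous_apply j).comp continuous_snd)))
  obtain ⟨⟨x₀, v₀⟩, hz₀, hmin⟩ := (hKcpt.prod hScpt).exists_isMinOn
    (hKne.prod hSne) hφc.continuousOn
  have hx₀K : x₀ ∈ K := hz₀.1
  have hv₀S : v₀ ⬝ᵥ v₀ = 1 := hz₀.2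
  have hx₀ne : x₀ ≠ 0 := by
    intro h0
    have h1 := hx₀K.2.1
    rw [h0] at h1; simp at h1
  have hv₀ne : v₀ ≠ 0 := by
    intro h0; rw [h0] at hv₀S; simp [dotProduct] at hv₀S
  have hFpd := hpd x₀ hx₀K.1 hx₀ne hx₀K.2.2
  have hc : 0 < φ (x₀, v₀) := by
    have h1 := hFpd.dotProduct_mulVec_pos hv₀ne
    simpa [hφ] using h1
  set c := φ (x₀, v₀) with hcdef
  obtain ⟨x₁, hx₁, hmax⟩ := hKcpt.exists_isMaxOn hKne
    (MvPolynomial.continuous_eval g).continuousOn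
  set γ := max (eval x₁ g) 0 with hγ
  have hγ0 : 0 ≤ γ := le_max_right _ _
  refine ⟨c / (2 * (γ + 1)), div_pos hc (by positivity), fun x hx hx0 hxG => ?_⟩
  set ε := c / (2 * (γ + 1)) with hε
  have hε0 : 0 < ε := div_pos hc (by positivity)
  have hεγ : ε * γ < c := by
    rw [hε, div_mul_eq_mul_div, div_lt_iff₀ (by positivity)]
    nlinarith
  obtain ⟨ht, hxK⟩ := key x hx hx0 hxG
  set t := ∑ i, x i with htdef
  set xh := t⁻¹ • x with hxh
  have hxt : x = t • xh := by
    rw [hxh, smul_smul, mul_inv_cancel₀ ht.ne', one_smul]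
  rw [hMat, hEval]
  rw [Matrix.posDef_iff_dotProduct_mulVec]
  constructor
  · apply Matrix.ext
    intro i j
    simp only [Matrix.conjTranspose_apply, Matrix.sub_apply, Matrix.smul_apply, Matrix.one_apply,
      smul_eq_mul, star_trivial]
    have h1 : evalMat x F j i = evalMat x F i j := by
      simp only [evalMat, Matrix.map_apply]; rw [hFs.apply]
    rw [h1]
    by_cases hij : i = j
    · subst hij; ring
    · simp [hij, Ne.symm hij]
  · intro v hv
    have hvv0 : 0 ≤ v ⬝ᵥ v := Finset.sum_nonneg fun i _ => mul_self_nonneg (v i)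
    have hvv : 0 < v ⬝ᵥ v :=
      hvv0.lt_of_ne fun h => hv (dotProduct_self_eq_zero.mp h.symm)
    set a := Real.sqrt (v ⬝ᵥ v) with ha
    have ha0 : 0 < a := Real.sqrt_pos.mpr hvv
    have ha2 : a ^ 2 = v ⬝ᵥ v := Real.sq_sqrt hvv0
    set u := a⁻¹ • v with hu
    have hva : v = a • u := by rw [hu, smul_smul, mul_inv_cancel₀ ha0.ne', one_smul]
    have huS : u ∈ S := by
      show dotProduct u u = 1
      rw [hu, smul_dotProduct, dotProduct_smul, smul_eq_mul, smul_eq_mul, ← ha2]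
      field_simp
    have hminu : c ≤ u ⬝ᵥ (evalMat xh F *ᵥ u) := hmin (Set.mk_mem_prod hxK huS)
    have hgmax : eval xh g ≤ γ := le_trans (hmax hxK) (le_max_left _ _)
    have hsx : eval x s = t := hsum x
    have hFx : evalMat x F = t ^ dF • evalMat xh F := by
      ext i j
      simp only [evalMat, Matrix.map_apply, Matrix.smul_apply, smul_eq_mul]
      conv_lhs => rw [hxt]
      exact hFH t xh i j
    have hgx : eval x g = t ^ D * eval xh g := by
      conv_lhs => rw [hxt]
      exact hgH t xh
    rw [star_trivial, sub_mulVec, dotProduct_sub, smul_mulVec, dotProduct_smul,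
      smul_mulVec, dotProduct_smul, one_mulVec, hsx, hFx, smul_mulVec,
      dotProduct_smul, hgx]
    have hQv : v ⬝ᵥ (evalMat xh F *ᵥ v) = (v ⬝ᵥ v) * (u ⬝ᵥ (evalMat xh F *ᵥ u)) := by
      conv_lhs => rw [hva]
      rw [qf_smul, ha2]
    rw [hQv]
    simp only [smul_eq_mul]
    have htD : t ^ (D - dF) * t ^ dF = t ^ D := by rw [← pow_add, hDF]
    have h3 : 0 < u ⬝ᵥ (evalMat xh F *ᵥ u) - ε * eval xh g := by
      have h1 : ε * eval xh g ≤ ε * γ := mul_le_mul_of_nonneg_left hgmax hε0.le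
      linarith
    have heq : t ^ (D - dF) * (t ^ dF * ((v ⬝ᵥ v) * (u ⬝ᵥ (evalMat xh F *ᵥ u))))
        - ε * (t ^ D * eval xh g) * (v ⬝ᵥ v)
        = t ^ D * ((v ⬝ᵥ v) * ((u ⬝ᵥ (evalMat xh F *ᵥ u)) - ε * eval xh g)) := by
      rw [← htD]; ring
    rw [heq]
    exact mul_pos (pow_pos ht D) (mul_pos hvv h3)
end

section
/- Let S = (S_α)_{α∈ℕⁿ_{2d}} be a truncated sequence of p×p symmetric matrices with M_d(S) ⪰ 0. Then for any SOS matrix Σ(x,y) ∈ S[x,y]^{pq} with deg_x Σ ≤ 2d and deg_y Σ ≤ 2k, the Riesz functional evaluation L_S(∫_Y ⟨Σ, G⟩_p dν(y)) is nonnegative for all such Σ if and only if the localizing matrix M^ν_{d,k}(G S) is positive semidefinite. -/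
open MeasureTheory MvPolynomial Matrix Finset

noncomputable section AuxProofs
open MvPolynomial Matrix Finset MeasureTheory

namespace RieszAux

variable {n m p q d k : ℕ}

/-! ### Generic support-sum machinery -/

section SSum
variable {σ : Type*} {M : Type*} [AddCommMonoid M]

def sSum (h : (σ →₀ ℕ) → ℝ → M) (f : MvPolynomial σ ℝ) : M :=
  ∑ α ∈ f.support, h α (f.coeff α)

lemma sSum_superset (h : (σ →₀ ℕ) → ℝ → M) (h0 : ∀ a, h a 0 = 0)
    {f : MvPolynomial σ ℝ} {s : Finset (σ →₀ ℕ)} (hs : f.support ⊆ s) :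
    sSum h f = ∑ α ∈ s, h α (f.coeff α) :=
  Finset.sum_subset hs fun x _ hx => by
    rw [MvPolynomial.notMem_support_iff.mp hx, h0]

lemma sSum_zero (h : (σ →₀ ℕ) → ℝ → M) : sSum h (0 : MvPolynomial σ ℝ) = 0 := by
  simp [sSum]

lemma sSum_add (h : (σ →₀ ℕ) → ℝ → M) (h0 : ∀ a, h a 0 = 0)
    (hadd : ∀ a b c, h a (b + c) = h a b + h a c) (f g : MvPolynomial σ ℝ) :
    sSum h (f + g) = sSum h f + sSum h g := by
  classical
  rw [sSum_superset h h0 (MvPolynomial.support_add (p := f) (q := g)),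
      sSum_superset h h0 (Finset.subset_union_left (s₁ := f.support) (s₂ := g.support)),
      sSum_superset h h0 (Finset.subset_union_right (s₁ := f.support) (s₂ := g.support)),
      ← Finset.sum_add_distrib]
  exact Finset.sum_congr rfl fun a _ => by rw [MvPolynomial.coeff_add, hadd]

lemma sSum_finsetSum (h : (σ →₀ ℕ) → ℝ → M) (h0 : ∀ a, h a 0 = 0)
    (hadd : ∀ a b c, h a (b + c) = h a b + h a c)
    {ι : Type*} (s : Finset ι) (F : ι → MvPolynomial σ ℝ) :
    sSum h (∑ i ∈ s, F i) = ∑ i ∈ s, sSum h (F i) := by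
  classical
  induction s using Finset.cons_induction with
  | empty => simp [sSum_zero]
  | cons a s ha ih => rw [Finset.sum_cons, sSum_add h h0 hadd, ih, Finset.sum_cons]

lemma sSum_monomial (h : (σ →₀ ℕ) → ℝ → M) (h0 : ∀ a, h a 0 = 0)
    (E : σ →₀ ℕ) (r : ℝ) : sSum h (MvPolynomial.monomial E r) = h E r := by
  classical
  rcases eq_or_ne r 0 with rfl | hr
  · rw [map_zero, sSum_zero, h0]
  · simp [sSum, MvPolynomial.support_monomial, hr, MvPolynomial.coeff_monomial]

end SSum

/-! ### weighted degrees -/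

section WDeg
variable {σ : Type*}

lemma wdeg_mul_le [DecidableEq σ] (w : (σ →₀ ℕ) → ℕ) (hw : ∀ a b, w (a + b) = w a + w b)
    (f g : MvPolynomial σ ℝ) :
    ((f * g).support.sup w) ≤ f.support.sup w + g.support.sup w := by
  classical
  apply Finset.sup_le
  intro e he
  have hne := MvPolynomial.mem_support_iff.mp he
  rw [MvPolynomial.coeff_mul] at hne
  obtain ⟨x, hx, hx0⟩ := Finset.exists_ne_zero_of_sum_ne_zero hne
  have h1 : MvPolynomial.coeff x.1 f ≠ 0 := left_ne_zero_of_mul hx0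
  have h2 : MvPolynomial.coeff x.2 g ≠ 0 := right_ne_zero_of_mul hx0
  have hxe : x.1 + x.2 = e := Finset.HasAntidiagonal.mem_antidiagonal.mp hx
  calc w e = w x.1 + w x.2 := by rw [← hxe, hw]
    _ ≤ _ := add_le_add
        (Finset.le_sup (MvPolynomial.mem_support_iff.mpr h1))
        (Finset.le_sup (MvPolynomial.mem_support_iff.mpr h2))

/-- Key SOS degree lemma: each summand of a sum of squares has at most half the
weighted degree of the sum. -/
lemma sos_deg_le [DecidableEq σ] {L : ℕ} (P : Fin L → MvPolynomial σ ℝ)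
    (w : (σ →₀ ℕ) → ℕ) (hw : ∀ a b, w (a + b) = w a + w b) {dd : ℕ}
    (h : (∑ i, P i ^ 2).support.sup w ≤ 2 * dd) (i0 : Fin L) :
    (P i0).support.sup w ≤ dd := by
  classical
  by_contra hcon
  set D := Finset.univ.sup (fun i => (P i).support.sup w) with hD
  have hDd : dd < D := by
    rw [hD]
    exact lt_of_lt_of_le (lt_of_not_ge hcon)
      (Finset.le_sup (f := fun i => (P i).support.sup w) (Finset.mem_univ i0))
  have hsupD : ∀ i, (P i).support.sup w ≤ D := fun i => by
    rw [hD]; exact Finset.le_sup (f := fun i => (P i).support.sup w) (Finset.mem_univ i)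
  obtain ⟨i1, -, hi1⟩ := Finset.exists_mem_eq_sup Finset.univ ⟨i0, Finset.mem_univ i0⟩
      (fun i => (P i).support.sup w)
  have hPne : (P i1).support.Nonempty := by
    by_contra hh
    rw [Finset.not_nonempty_iff_eq_empty] at hh
    have : D = 0 := by rw [hD, hi1, hh]; simp
    omega
  obtain ⟨e0, he0, he0eq⟩ := Finset.exists_mem_eq_sup _ hPne w
  have he0D : w e0 = D := by rw [hD, hi1, he0eq]
  set Q : Fin L → MvPolynomial σ ℝ := fun i =>
    ∑ e ∈ (P i).support.filter (fun e => w e = D),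
      MvPolynomial.monomial e (MvPolynomial.coeff e (P i)) with hQ
  have hQcoeff : ∀ i e, MvPolynomial.coeff e (Q i)
      = if w e = D then MvPolynomial.coeff e (P i) else 0 := by
    intro i e
    rw [hQ]
    rw [MvPolynomial.coeff_sum]
    simp only [MvPolynomial.coeff_monomial]
    rw [Finset.sum_ite_eq' ((P i).support.filter (fun e => w e = D)) e
      (fun e' => MvPolynomial.coeff e' (P i))]
    by_cases h1 : w e = D
    · by_cases h2 : e ∈ (P i).support
      · simp [Finset.mem_filter, h1, h2]
      · simp [Finset.mem_filter, h1, h2, MvPolynomial.notMem_support_iff.mp h2]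
    · simp [Finset.mem_filter, h1]
  have hPcoeff0 : ∀ i e, D < w e → MvPolynomial.coeff e (P i) = 0 := by
    intro i e hDe
    by_contra hc
    have := Finset.le_sup (f := w) (MvPolynomial.mem_support_iff.mpr hc)
    have := hsupD i
    omega
  have key : ∀ E, w E = 2 * D → ∀ i,
      MvPolynomial.coeff E (P i ^ 2) = MvPolynomial.coeff E (Q i ^ 2) := by
    intro E hE i
    rw [pow_two, pow_two, MvPolynomial.coeff_mul, MvPolynomial.coeff_mul]
    apply Finset.sum_congr rfl
    intro x hx
    have hsum : w x.1 + w x.2 = 2 * D := by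
      rw [← hw, Finset.HasAntidiagonal.mem_antidiagonal.mp hx, hE]
    rcases eq_or_ne (w x.1) D with h1 | h1
    · have h2 : w x.2 = D := by omega
      rw [hQcoeff, hQcoeff, if_pos h1, if_pos h2]
    · rcases lt_or_gt_of_ne h1 with hlt | hgt
      · have h2 : D < w x.2 := by omega
        rw [hPcoeff0 i x.2 h2, hQcoeff, if_neg h1, mul_zero, zero_mul]
      · have h2 : w x.2 < D := by omega
        rw [hPcoeff0 i x.1 hgt, hQcoeff i x.2, if_neg (by omega), zero_mul, mul_zero]
  have hQi1 : Q i1 ≠ 0 := by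
    intro h0
    have : MvPolynomial.coeff e0 (Q i1) = 0 := by rw [h0]; simp
    rw [hQcoeff, if_pos he0D] at this
    exact MvPolynomial.mem_support_iff.mp he0 this
  have hSQ : (∑ i, Q i ^ 2) ≠ 0 := by
    intro h0
    apply hQi1
    have hz : ∀ v : σ → ℝ, MvPolynomial.eval v (Q i1) = 0 := by
      intro v
      have h2 : ∑ i, (MvPolynomial.eval v (Q i)) ^ 2 = 0 := by
        have := congrArg (MvPolynomial.eval v) h0
        simpa using this
      have h3 := (Finset.sum_eq_zero_iff_of_nonneg (fun i _ => sq_nonneg _)).mp h2 i1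
        (Finset.mem_univ i1)
      exact pow_eq_zero_iff two_ne_zero |>.mp h3
    exact MvPolynomial.funext (fun v => by rw [hz v, map_zero])
  obtain ⟨E, hEne⟩ := MvPolynomial.ne_zero_iff.mp hSQ
  have hEsum : MvPolynomial.coeff E (∑ i, Q i ^ 2) ≠ 0 := hEne
  rw [MvPolynomial.coeff_sum] at hEsum
  obtain ⟨i2, -, hi2⟩ := Finset.exists_ne_zero_of_sum_ne_zero hEsum
  have hwE : w E = 2 * D := by
    rw [pow_two, MvPolynomial.coeff_mul] at hi2
    obtain ⟨x, hx, hx0⟩ := Finset.exists_ne_zero_of_sum_ne_zero hi2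
    have h1 : MvPolynomial.coeff x.1 (Q i2) ≠ 0 := left_ne_zero_of_mul hx0
    have h2 : MvPolynomial.coeff x.2 (Q i2) ≠ 0 := right_ne_zero_of_mul hx0
    rw [hQcoeff] at h1 h2
    have hw1 : w x.1 = D := by by_contra hh; rw [if_neg hh] at h1; exact h1 rfl
    have hw2 : w x.2 = D := by by_contra hh; rw [if_neg hh] at h2; exact h2 rfl
    have hxe : x.1 + x.2 = E := Finset.HasAntidiagonal.mem_antidiagonal.mp hx
    rw [← hxe, hw, hw1, hw2]; ring
  have hEP : MvPolynomial.coeff E (∑ i, P i ^ 2) ≠ 0 := by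
    rw [MvPolynomial.coeff_sum]
    have : ∀ i, MvPolynomial.coeff E (P i ^ 2) = MvPolynomial.coeff E (Q i ^ 2) :=
      key E hwE
    rw [Finset.sum_congr rfl fun i _ => this i, ← MvPolynomial.coeff_sum]
    exact hEne
  have := Finset.le_sup (f := w) (MvPolynomial.mem_support_iff.mpr hEP)
  omega

end WDeg

/-! ### exponent encoding -/

def emb' (w : Expo n d × Expo m k) : (Fin n ⊕ Fin m) →₀ ℕ :=
  (expF w.1.1).sumElim (expF w.2.1)

lemma expF_apply {N D : ℕ} (a : Fin N → Fin (D + 1)) (i : Fin N) :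
    expF a i = (a i : ℕ) := by
  simp [expF]

lemma emb'_inl (w : Expo n d × Expo m k) (i : Fin n) :
    emb' w (Sum.inl i) = (w.1.1 i : ℕ) := by
  simp [emb', expF_apply]

lemma emb'_inr (w : Expo n d × Expo m k) (j : Fin m) :
    emb' w (Sum.inr j) = (w.2.1 j : ℕ) := by
  simp [emb', expF_apply]

lemma emb'_inj : Function.Injective (emb' (n := n) (m := m) (d := d) (k := k)) := by
  intro w w' h
  have h1 : ∀ i, (w.1.1 i : ℕ) = (w'.1.1 i : ℕ) := fun i => by
    rw [← emb'_inl w i, ← emb'_inl w' i, h]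
  have h2 : ∀ j, (w.2.1 j : ℕ) = (w'.2.1 j : ℕ) := fun j => by
    rw [← emb'_inr w j, ← emb'_inr w' j, h]
  have e1 : w.1 = w'.1 := Subtype.ext (funext fun i => Fin.ext (h1 i))
  have e2 : w.2 = w'.2 := Subtype.ext (funext fun j => Fin.ext (h2 j))
  exact Prod.ext e1 e2

lemma xPart_apply {e : (Fin n ⊕ Fin m) →₀ ℕ} (i : Fin n) :
    xPart e i = e (Sum.inl i) := rfl

lemma xPart_add (a b : (Fin n ⊕ Fin m) →₀ ℕ) :
    xPart (a + b) = xPart a + xPart b := by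
  ext i
  simp [xPart_apply, Finsupp.add_apply]

lemma xPart_emb' (w : Expo n d × Expo m k) : xPart (emb' w) = expF w.1.1 := by
  ext i
  rw [xPart_apply, emb'_inl, expF_apply]

def tpoly (z : ((Expo n d × Expo m k) × (Fin p × Fin q)) → ℝ) (I : Fin p × Fin q) :
    MvPolynomial (Fin n ⊕ Fin m) ℝ :=
  ∑ w : Expo n d × Expo m k, MvPolynomial.monomial (emb' w) (z (w, I))

lemma tpoly_support (z : ((Expo n d × Expo m k) × (Fin p × Fin q)) → ℝ) (I : Fin p × Fin q) :
    (tpoly z I).support ⊆ Finset.image (emb' (n := n) (m := m) (d := d) (k := k))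
      Finset.univ := by
  classical
  intro e he
  have h := MvPolynomial.mem_support_iff.mp he
  rw [tpoly, MvPolynomial.coeff_sum] at h
  obtain ⟨w, -, hw⟩ := Finset.exists_ne_zero_of_sum_ne_zero h
  rw [MvPolynomial.coeff_monomial] at hw
  have : emb' w = e := by
    by_contra hne; rw [if_neg hne] at hw; exact hw rfl
  exact Finset.mem_image.mpr ⟨w, Finset.mem_univ _, this⟩

lemma support_sub_emb {f : MvPolynomial (Fin n ⊕ Fin m) ℝ}
    (hx : ∀ e ∈ f.support, (∑ i : Fin n, e (Sum.inl i)) ≤ d)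
    (hy : ∀ e ∈ f.support, (∑ j : Fin m, e (Sum.inr j)) ≤ k) :
    f.support ⊆ Finset.image (emb' (n := n) (m := m) (d := d) (k := k)) Finset.univ := by
  classical
  intro e he
  rw [Finset.mem_image]
  have hxi : ∀ i, e (Sum.inl i) ≤ d := fun i =>
    le_trans (Finset.single_le_sum (f := fun i => e (Sum.inl i))
      (fun _ _ => Nat.zero_le _) (Finset.mem_univ i)) (hx e he)
  have hyj : ∀ j, e (Sum.inr j) ≤ k := fun j =>
    le_trans (Finset.single_le_sum (f := fun j => e (Sum.inr j))
      (fun _ _ => Nat.zero_le _) (Finset.mem_univ j)) (hy e he)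
  refine ⟨(⟨fun i => ⟨e (Sum.inl i), Nat.lt_succ_of_le (hxi i)⟩, ?_⟩,
           ⟨fun j => ⟨e (Sum.inr j), Nat.lt_succ_of_le (hyj j)⟩, ?_⟩),
           Finset.mem_univ _, ?_⟩
  · simpa using hx e he
  · simpa using hy e he
  · ext a
    cases a with
    | inl i => rw [emb'_inl]
    | inr j => rw [emb'_inr]

lemma poly_eq_sum_emb (f : MvPolynomial (Fin n ⊕ Fin m) ℝ)
    (hsub : f.support ⊆ Finset.image (emb' (n := n) (m := m) (d := d) (k := k))
      Finset.univ) :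
    f = ∑ w : Expo n d × Expo m k,
      MvPolynomial.monomial (emb' w) (MvPolynomial.coeff (emb' w) f) := by
  classical
  conv_lhs => rw [← MvPolynomial.support_sum_monomial_coeff f]
  rw [Finset.sum_subset hsub (fun e _ he => by
    rw [MvPolynomial.notMem_support_iff.mp he, map_zero]),
    Finset.sum_image (fun x _ y _ hxy => emb'_inj hxy)]

lemma wX_emb' (w : Expo n d × Expo m k) :
    (∑ i : Fin n, emb' w (Sum.inl i)) ≤ d := by
  have : ∀ i, emb' w (Sum.inl i) = (w.1.1 i : ℕ) := emb'_inl w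
  rw [Finset.sum_congr rfl fun i _ => this i]
  exact w.1.2

lemma wY_emb' (w : Expo n d × Expo m k) :
    (∑ j : Fin m, emb' w (Sum.inr j)) ≤ k := by
  have : ∀ j, emb' w (Sum.inr j) = (w.2.1 j : ℕ) := emb'_inr w
  rw [Finset.sum_congr rfl fun j _ => this j]
  exact w.2.2

lemma tpoly_degX (z : ((Expo n d × Expo m k) × (Fin p × Fin q)) → ℝ) (I : Fin p × Fin q) :
    degX (tpoly z I) ≤ d := by
  classical
  apply Finset.sup_le
  intro e he
  obtain ⟨w, -, rfl⟩ := Finset.mem_image.mp (tpoly_support z I he)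
  exact wX_emb' w

lemma tpoly_degY (z : ((Expo n d × Expo m k) × (Fin p × Fin q)) → ℝ) (I : Fin p × Fin q) :
    degY (tpoly z I) ≤ k := by
  classical
  apply Finset.sup_le
  intro e he
  obtain ⟨w, -, rfl⟩ := Finset.mem_image.mp (tpoly_support z I he)
  exact wY_emb' w

/-! ### the Riesz functional as support sums -/

def momI (ν : Measure (Fin m → ℝ)) (e : (Fin n ⊕ Fin m) →₀ ℕ) : ℝ :=
  ∫ y, ∏ j : Fin m, (y j) ^ (e (Sum.inr j)) ∂ν

def hInt (ν : Measure (Fin m → ℝ)) : ((Fin n ⊕ Fin m) →₀ ℕ) → ℝ → MvPolynomial (Fin n) ℝ :=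
  fun e cc => MvPolynomial.monomial (xPart e) (cc * momI ν e)

def hRz (S : (Fin n →₀ ℕ) → Matrix (Fin p) (Fin p) ℝ) (j i : Fin p) :
    (Fin n →₀ ℕ) → ℝ → ℝ :=
  fun α cc => cc * S α j i

lemma hInt0 (ν : Measure (Fin m → ℝ)) : ∀ e, hInt (n := n) ν e 0 = 0 := by
  intro e; simp [hInt]

lemma hIntadd (ν : Measure (Fin m → ℝ)) :
    ∀ (e : (Fin n ⊕ Fin m) →₀ ℕ) (b c : ℝ), hInt ν e (b + c) = hInt ν e b + hInt ν e c := by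
  intro e b c; simp [hInt, add_mul]

lemma hRz0 (S : (Fin n →₀ ℕ) → Matrix (Fin p) (Fin p) ℝ) (j i : Fin p) :
    ∀ α, hRz S j i α 0 = 0 := by
  intro α; simp [hRz]

lemma hRzadd (S : (Fin n →₀ ℕ) → Matrix (Fin p) (Fin p) ℝ) (j i : Fin p) :
    ∀ α (b c : ℝ), hRz S j i α (b + c) = hRz S j i α b + hRz S j i α c := by
  intro α b c; simp [hRz, add_mul]

lemma integY_eq (ν : Measure (Fin m → ℝ)) (f : MvPolynomial (Fin n ⊕ Fin m) ℝ) :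
    integY ν f = sSum (hInt ν) f := rfl

lemma RieszL_eq (S : (Fin n →₀ ℕ) → Matrix (Fin p) (Fin p) ℝ)
    (H : Matrix (Fin p) (Fin p) (MvPolynomial (Fin n) ℝ)) :
    RieszL S H = ∑ i, ∑ j, sSum (hRz S j i) (H i j) := rfl

def Phi (ν : Measure (Fin m → ℝ))
    (G : Matrix (Fin q) (Fin q) (MvPolynomial (Fin n ⊕ Fin m) ℝ))
    (S : (Fin n →₀ ℕ) → Matrix (Fin p) (Fin p) ℝ)
    (Sg : Matrix (Fin p × Fin q) (Fin p × Fin q) (MvPolynomial (Fin n ⊕ Fin m) ℝ)) : ℝ :=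
  RieszL S ((lram Sg G).map (integY ν))

lemma Phi_zero (ν : Measure (Fin m → ℝ))
    (G : Matrix (Fin q) (Fin q) (MvPolynomial (Fin n ⊕ Fin m) ℝ))
    (S : (Fin n →₀ ℕ) → Matrix (Fin p) (Fin p) ℝ) :
    Phi ν G S 0 = 0 := by
  unfold Phi
  rw [RieszL_eq]
  have : ∀ i j : Fin p, ((lram 0 G).map (integY ν)) i j = 0 := by
    intro i j
    simp [lram, Matrix.map_apply, integY_eq, sSum_zero]
  rw [Finset.sum_congr rfl fun i _ => Finset.sum_congr rfl fun j _ => by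
    rw [this i j, sSum_zero]]
  simp

lemma Phi_add (ν : Measure (Fin m → ℝ))
    (G : Matrix (Fin q) (Fin q) (MvPolynomial (Fin n ⊕ Fin m) ℝ))
    (S : (Fin n →₀ ℕ) → Matrix (Fin p) (Fin p) ℝ) (A B) :
    Phi ν G S (A + B) = Phi ν G S A + Phi ν G S B := by
  unfold Phi
  rw [RieszL_eq, RieszL_eq, RieszL_eq, ← Finset.sum_add_distrib]
  refine Finset.sum_congr rfl fun i _ => ?_
  rw [← Finset.sum_add_distrib]
  refine Finset.sum_congr rfl fun j _ => ?_
  have hmap : ((lram (A + B) G).map (integY ν)) i j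
      = ((lram A G).map (integY ν)) i j + ((lram B G).map (integY ν)) i j := by
    simp only [Matrix.map_apply, lram, Matrix.of_apply, Matrix.add_apply, integY_eq]
    rw [← sSum_add (hInt ν) (hInt0 ν) (hIntadd ν)]
    congr 1
    rw [← Finset.sum_add_distrib]
    refine Finset.sum_congr rfl fun a _ => ?_
    rw [← Finset.sum_add_distrib]
    exact Finset.sum_congr rfl fun c _ => by rw [add_mul]
  rw [hmap, sSum_add (hRz S j i) (hRz0 S j i) (hRzadd S j i)]

lemma Phi_sum (ν : Measure (Fin m → ℝ))
    (G : Matrix (Fin q) (Fin q) (MvPolynomial (Fin n ⊕ Fin m) ℝ))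
    (S : (Fin n →₀ ℕ) → Matrix (Fin p) (Fin p) ℝ)
    {ι : Type*} (s : Finset ι)
    (F : ι → Matrix (Fin p × Fin q) (Fin p × Fin q) (MvPolynomial (Fin n ⊕ Fin m) ℝ)) :
    Phi ν G S (∑ l ∈ s, F l) = ∑ l ∈ s, Phi ν G S (F l) := by
  classical
  induction s using Finset.cons_induction with
  | empty => simpa using Phi_zero ν G S
  | cons a s ha ih => rw [Finset.sum_cons, Phi_add, ih, Finset.sum_cons]

lemma mul_expand {σ : Type*} {ι κ : Type*} [Fintype ι] [Fintype κ]
    (a : ι → (σ →₀ ℕ)) (za : ι → ℝ) (b : κ → (σ →₀ ℕ)) (zb : κ → ℝ)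
    (g : MvPolynomial σ ℝ) :
    (∑ i, MvPolynomial.monomial (a i) (za i)) * (∑ j, MvPolynomial.monomial (b j) (zb j)) * g
      = ∑ i, ∑ j, ∑ e ∈ g.support,
          MvPolynomial.monomial (a i + b j + e) (za i * zb j * MvPolynomial.coeff e g) := by
  conv_lhs => rw [← MvPolynomial.support_sum_monomial_coeff g]
  rw [Finset.sum_mul_sum]
  simp only [Finset.sum_mul, Finset.mul_sum, MvPolynomial.monomial_mul]
  rw [Finset.sum_comm]
  exact Finset.sum_congr rfl fun i _ => Finset.sum_comm

set_option maxHeartbeats 1000000 in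
lemma riesz_quad (ν : Measure (Fin m → ℝ))
    (G : Matrix (Fin q) (Fin q) (MvPolynomial (Fin n ⊕ Fin m) ℝ))
    (S : (Fin n →₀ ℕ) → Matrix (Fin p) (Fin p) ℝ)
    (z v : ((Expo n d × Expo m k) × (Fin p × Fin q)) → ℝ) :
    RieszL S ((lram (Matrix.of fun I J => tpoly z I * tpoly v J) G).map (integY ν))
      = dotProduct z ((locMat ν G S d k).mulVec v) := by
  classical
  rw [RieszL_eq]
  have hstep : ∀ i j : Fin p,
      sSum (hRz S j i)
        (((lram (Matrix.of fun I J => tpoly z I * tpoly v J) G).map (integY ν)) i j)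
        = ∑ a : Fin q, ∑ c : Fin q, ∑ w : Expo n d × Expo m k, ∑ w' : Expo n d × Expo m k,
            ∑ e ∈ (G c a).support,
              z (w, (j, c)) * v (w', (i, a)) * MvPolynomial.coeff e (G c a)
                 * momI ν (emb' w + emb' w' + e) * S (xPart (emb' w + emb' w' + e)) j i := by
    intro i j
    have hentry : ((lram (Matrix.of fun I J => tpoly z I * tpoly v J) G).map (integY ν)) i j
        = integY ν (∑ a : Fin q, ∑ c : Fin q,
            ∑ w : Expo n d × Expo m k, ∑ w' : Expo n d × Expo m k, ∑ e ∈ (G c a).support,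
              MvPolynomial.monomial (emb' w + emb' w' + e)
                (z (w, (j, c)) * v (w', (i, a)) * MvPolynomial.coeff e (G c a))) := by
      simp only [Matrix.map_apply, lram, Matrix.of_apply]
      refine congrArg (integY ν) (Finset.sum_congr rfl fun a _ =>
        Finset.sum_congr rfl fun c _ => ?_)
      simp only [tpoly]
      exact mul_expand _ _ _ _ _
    rw [hentry, integY_eq]
    simp only [sSum_finsetSum (hInt ν) (hInt0 ν) (hIntadd ν),
      sSum_monomial (hInt ν) (hInt0 ν),
      sSum_finsetSum (hRz S j i) (hRz0 S j i) (hRzadd S j i),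
      sSum_monomial (hRz S j i) (hRz0 S j i), hInt, hRz]
  rw [Finset.sum_congr rfl fun i _ => Finset.sum_congr rfl fun j _ => hstep i j]
  -- reorder : [i j a c w w'] → [w j c w' i a]
  conv_lhs => enter [2,i,2,j,2,a]; rw [Finset.sum_comm]
  conv_lhs => enter [2,i,2,j]; rw [Finset.sum_comm]
  conv_lhs => enter [2,i]; rw [Finset.sum_comm]
  conv_lhs => rw [Finset.sum_comm]
  conv_lhs => enter [2,w]; rw [Finset.sum_comm]
  conv_lhs => enter [2,w,2,j,2,i]; rw [Finset.sum_comm]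
  conv_lhs => enter [2,w,2,j]; rw [Finset.sum_comm]
  conv_lhs => enter [2,w,2,j,2,c,2,i]; rw [Finset.sum_comm]
  conv_lhs => enter [2,w,2,j,2,c]; rw [Finset.sum_comm]
  -- expand the RHS
  simp only [dotProduct, Matrix.mulVec, locMat, Matrix.of_apply]
  conv_rhs => rw [Fintype.sum_prod_type]
  conv_rhs => enter [2,w]; rw [Fintype.sum_prod_type]
  conv_rhs => enter [2,w,2,j,2,c,2]; rw [Fintype.sum_prod_type]
  conv_rhs => enter [2,w,2,j,2,c,2,2,w']; rw [Fintype.sum_prod_type]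
  simp only [Finset.mul_sum, Finset.sum_mul]
  refine Finset.sum_congr rfl fun w _ => Finset.sum_congr rfl fun j _ =>
    Finset.sum_congr rfl fun c _ => Finset.sum_congr rfl fun w' _ =>
    Finset.sum_congr rfl fun i _ => Finset.sum_congr rfl fun a _ =>
    Finset.sum_congr rfl fun e he => ?_
  have hE : xPart (emb' w + emb' w' + e) = expF w.1.1 + expF w'.1.1 + xPart e := by
    rw [xPart_add, xPart_add, xPart_emb', xPart_emb']
  have hM : momI ν (emb' w + emb' w' + e)
      = ∫ y, ∏ j' : Fin m, (y j') ^ (e (Sum.inr j') + (w.2.1 j' : ℕ) + (w'.2.1 j' : ℕ)) ∂ν := by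
    unfold momI
    congr 1
    funext y
    refine Finset.prod_congr rfl fun j' _ => ?_
    congr 1
    simp only [Finsupp.add_apply, emb'_inr]
    omega
  rw [hE, hM]
  ring

lemma degX_mul_le (f g : MvPolynomial (Fin n ⊕ Fin m) ℝ) :
    degX (f * g) ≤ degX f + degX g := by
  classical
  unfold degX
  exact wdeg_mul_le _ (fun a b => by simp [Finsupp.add_apply, Finset.sum_add_distrib]) f g

lemma degY_mul_le (f g : MvPolynomial (Fin n ⊕ Fin m) ℝ) :
    degY (f * g) ≤ degY f + degY g := by
  classical
  unfold degY
  exact wdeg_mul_le _ (fun a b => by simp [Finsupp.add_apply, Finset.sum_add_distrib]) f g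

lemma locMat_symm (ν : Measure (Fin m → ℝ))
    (G : Matrix (Fin q) (Fin q) (MvPolynomial (Fin n ⊕ Fin m) ℝ)) (hGs : G.IsSymm)
    (S : (Fin n →₀ ℕ) → Matrix (Fin p) (Fin p) ℝ) (hsym : ∀ α, (S α).IsSymm) :
    (locMat ν G S d k).IsSymm := by
  show (locMat ν G S d k)ᵀ = locMat ν G S d k
  ext r c
  rw [Matrix.transpose_apply]
  show locMat ν G S d k c r = locMat ν G S d k r c
  unfold locMat
  simp only [Matrix.of_apply]
  rw [show G c.2.2 r.2.2 = G r.2.2 c.2.2 from (hGs.apply c.2.2 r.2.2).symm]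
  refine Finset.sum_congr rfl fun e he => ?_
  have h1 : (∫ y, ∏ j : Fin m, (y j) ^ (e (Sum.inr j) + (c.1.2.1 j : ℕ) + (r.1.2.1 j : ℕ)) ∂ν)
      = ∫ y, ∏ j : Fin m, (y j) ^ (e (Sum.inr j) + (r.1.2.1 j : ℕ) + (c.1.2.1 j : ℕ)) ∂ν := by
    congr 1
    funext y
    exact Finset.prod_congr rfl fun j _ => by congr 1; omega
  have h2 : S (expF c.1.1.1 + expF r.1.1.1 + xPart e) c.2.1 r.2.1
      = S (expF r.1.1.1 + expF c.1.1.1 + xPart e) r.2.1 c.2.1 := by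
    rw [add_comm (expF c.1.1.1) (expF r.1.1.1)]
    exact (hsym _).apply r.2.1 c.2.1
  rw [h1, h2]

end RieszAux
end AuxProofs

set_option maxHeartbeats 1000000 in
/-- nonnegativity of the Riesz functional on the quadratic-module cone
is equivalent to PSD-ness of the localizing matrix `M^ν_{d,k}(G S)`. -/
theorem riesz_iff_locMat {n m p q d k : ℕ}
    (Y : Set (Fin m → ℝ)) (hY : IsClosed Y)
    (ν : Measure (Fin m → ℝ)) (hsupp : hasSupport ν Y) (hmom : momentsFinite ν)
    (G : Matrix (Fin q) (Fin q) (MvPolynomial (Fin n ⊕ Fin m) ℝ)) (hGs : G.IsSymm)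
    (S : (Fin n →₀ ℕ) → Matrix (Fin p) (Fin p) ℝ) (hsym : ∀ α, (S α).IsSymm)
    (hPSD : (momentMat S d).PosSemidef) :
    (∀ Sg : Matrix (Fin p × Fin q) (Fin p × Fin q) (MvPolynomial (Fin n ⊕ Fin m) ℝ),
        IsSOSMatrix Sg → matDegX Sg ≤ 2 * d → matDegY Sg ≤ 2 * k →
        0 ≤ RieszL S ((lram Sg G).map (integY ν))) ↔
      (locMat ν G S d k).PosSemidef := by
  classical
  constructor
  · intro hyp
    refine Matrix.PosSemidef.of_dotProduct_mulVec_nonneg (RieszAux.locMat_symm ν G hGs S hsym) fun x => ?_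
    have hwadd : ∀ a b : (Fin n ⊕ Fin m) →₀ ℕ, True := fun _ _ => trivial
    have hsos : IsSOSMatrix (Matrix.of fun I J => RieszAux.tpoly x I * RieszAux.tpoly x J) := by
      refine ⟨1, Matrix.of fun _ I => RieszAux.tpoly x I, ?_⟩
      ext I J
      simp [Matrix.mul_apply, Matrix.transpose_apply]
    have hdx : matDegX (Matrix.of fun I J => RieszAux.tpoly x I * RieszAux.tpoly x J) ≤ 2 * d := by
      refine Finset.sup_le fun I _ => Finset.sup_le fun J _ => ?_
      simp only [Matrix.of_apply]
      have h1 := RieszAux.degX_mul_le (RieszAux.tpoly x I) (RieszAux.tpoly x J)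
      have h2 := RieszAux.tpoly_degX x I
      have h3 := RieszAux.tpoly_degX x J
      omega
    have hdy : matDegY (Matrix.of fun I J => RieszAux.tpoly x I * RieszAux.tpoly x J) ≤ 2 * k := by
      refine Finset.sup_le fun I _ => Finset.sup_le fun J _ => ?_
      simp only [Matrix.of_apply]
      have h1 := RieszAux.degY_mul_le (RieszAux.tpoly x I) (RieszAux.tpoly x J)
      have h2 := RieszAux.tpoly_degY x I
      have h3 := RieszAux.tpoly_degY x J
      omega
    have hx := hyp _ hsos hdx hdy
    rw [RieszAux.riesz_quad ν G S x x] at hx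
    simpa using hx
  · intro hM Sg hsos hdx hdy
    obtain ⟨L, T, rfl⟩ := hsos
    have hdSgX : ∀ I J, degX ((Tᵀ * T) I J) ≤ 2 * d := by
      intro I J
      refine le_trans ?_ hdx
      exact le_trans
        (Finset.le_sup (f := fun J => degX ((Tᵀ * T) I J)) (Finset.mem_univ J))
        (Finset.le_sup (f := fun I => Finset.univ.sup fun J => degX ((Tᵀ * T) I J))
          (Finset.mem_univ I))
    have hdSgY : ∀ I J, degY ((Tᵀ * T) I J) ≤ 2 * k := by
      intro I J
      refine le_trans ?_ hdy
      exact le_trans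
        (Finset.le_sup (f := fun J => degY ((Tᵀ * T) I J)) (Finset.mem_univ J))
        (Finset.le_sup (f := fun I => Finset.univ.sup fun J => degY ((Tᵀ * T) I J))
          (Finset.mem_univ I))
    have hdiagEq : ∀ I, (Tᵀ * T) I I = ∑ l, (T l I) ^ 2 := by
      intro I
      simp [Matrix.mul_apply, Matrix.transpose_apply, pow_two]
    have hwaddX : ∀ a b : (Fin n ⊕ Fin m) →₀ ℕ,
        (∑ i : Fin n, (a + b) (Sum.inl i)) = (∑ i : Fin n, a (Sum.inl i)) + ∑ i : Fin n, b (Sum.inl i) := by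
      intro a b; simp [Finsupp.add_apply, Finset.sum_add_distrib]
    have hwaddY : ∀ a b : (Fin n ⊕ Fin m) →₀ ℕ,
        (∑ j : Fin m, (a + b) (Sum.inr j)) = (∑ j : Fin m, a (Sum.inr j)) + ∑ j : Fin m, b (Sum.inr j) := by
      intro a b; simp [Finsupp.add_apply, Finset.sum_add_distrib]
    have hTX : ∀ (l : Fin L) (I : Fin p × Fin q),
        (T l I).support.sup (fun e => ∑ i : Fin n, e (Sum.inl i)) ≤ d := by
      intro l I
      refine RieszAux.sos_deg_le (fun l => T l I) _ hwaddX ?_ l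
      have := hdSgX I I
      rw [hdiagEq I] at this
      exact this
    have hTY : ∀ (l : Fin L) (I : Fin p × Fin q),
        (T l I).support.sup (fun e => ∑ j : Fin m, e (Sum.inr j)) ≤ k := by
      intro l I
      refine RieszAux.sos_deg_le (fun l => T l I) _ hwaddY ?_ l
      have := hdSgY I I
      rw [hdiagEq I] at this
      exact this
    have hTl : ∀ (l : Fin L) (I : Fin p × Fin q),
        T l I = RieszAux.tpoly (d := d) (k := k) (fun r => MvPolynomial.coeff (RieszAux.emb' (d := d) (k := k) r.1) (T l r.2)) I := by
      intro l I
      have hsub := RieszAux.support_sub_emb (d := d) (k := k) (f := T l I)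
        (fun e he => le_trans
          (Finset.le_sup (f := fun e => ∑ i : Fin n, e (Sum.inl i)) he) (hTX l I))
        (fun e he => le_trans
          (Finset.le_sup (f := fun e => ∑ j : Fin m, e (Sum.inr j)) he) (hTY l I))
      exact RieszAux.poly_eq_sum_emb (T l I) hsub
    have hdecomp : Tᵀ * T = ∑ l : Fin L,
        Matrix.of (fun I J => RieszAux.tpoly (d := d) (k := k) (fun r => MvPolynomial.coeff (RieszAux.emb' (d := d) (k := k) r.1) (T l r.2)) I
          * RieszAux.tpoly (d := d) (k := k) (fun r => MvPolynomial.coeff (RieszAux.emb' (d := d) (k := k) r.1) (T l r.2)) J) := by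
      refine Matrix.ext fun I J => ?_
      simp only [Matrix.mul_apply, Matrix.transpose_apply, Matrix.sum_apply, Matrix.of_apply]
      exact Finset.sum_congr rfl fun l _ => by rw [← hTl l I, ← hTl l J]
    have key : RieszL S ((lram (Tᵀ * T) G).map (integY ν))
        = ∑ l : Fin L, dotProduct (fun r => MvPolynomial.coeff (RieszAux.emb' (d := d) (k := k) r.1) (T l r.2))
            ((locMat ν G S d k).mulVec (fun r => MvPolynomial.coeff (RieszAux.emb' (d := d) (k := k) r.1) (T l r.2))) := by
      have h1 : RieszL S ((lram (Tᵀ * T) G).map (integY ν)) = RieszAux.Phi ν G S (Tᵀ * T) := rfl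
      rw [h1, hdecomp, RieszAux.Phi_sum]
      exact Finset.sum_congr rfl fun l _ => RieszAux.riesz_quad ν G S _ _
    rw [key]
    refine Finset.sum_nonneg fun l _ => ?_
    simpa using hM.dotProduct_mulVec_nonneg (fun r => MvPolynomial.coeff (RieszAux.emb' (d := d) (k := k) r.1) (T l r.2))
end
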